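/- arXiv:2410.13544 — 7 statements merged into one kernel-verified Lean document; each statement's English description precedes it below -/
import Mathlib

section
/- Let F_m be the free group on x_1,…,x_m, let n ≥ 1, and let u_1,…,u_n ∈ {x_1,…,x_m}. Then the orbit of the tuple u = (u_1,…,u_n) under the Hurwitz action of the braid group B_n on F_m^n is exactly the set of tuples (f_1,…,f_n) ∈ F_m^n such that f_1⋯f_n = u_1⋯u_n and there exists a permutation τ ∈ S_n with f_k conjugate to u_{τ(k)} in F_m for every k. -/
/-- Defining relations of the braid group on `n` strands: the Artin generators are
`σ_0, …, σ_{n-2}` (`0`-based), indexed by `Fin (n-1)`. -/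
def braidRels (n : ℕ) : Set (FreeGroup (Fin (n - 1))) :=
  {r | ∃ i j : Fin (n - 1),
    (((j : ℕ) = (i : ℕ) + 1) ∧
      r = FreeGroup.of i * FreeGroup.of j * FreeGroup.of i *
        (FreeGroup.of j * FreeGroup.of i * FreeGroup.of j)⁻¹) ∨
    (((i : ℕ) + 2 ≤ (j : ℕ)) ∧
      r = FreeGroup.of i * FreeGroup.of j * (FreeGroup.of j * FreeGroup.of i)⁻¹)}

/-- The braid group on `n` strands, as a presented group. -/
abbrev BraidGroup (n : ℕ) := PresentedGroup (braidRels n)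

/-- The Artin generator `σ_i` of the braid group (`0`-based index `i : Fin (n-1)`). -/
def braidGen {n : ℕ} (i : Fin (n - 1)) : BraidGroup n := PresentedGroup.of i

/-- The Artin generator `σ_k` for a natural number index `k` (`0`-based);
equal to `1` if `k` is out of range. -/
def braidGen' (n k : ℕ) : BraidGroup n :=
  if h : k < n - 1 then braidGen ⟨k, h⟩ else 1

/-- The Birman–Ko–Lee generator `a_{ij}` (`0`-based): for `i < j`,
`a_{ij} = σ_i σ_{i+1} ⋯ σ_{j-2} σ_{j-1} σ_{j-2}⁻¹ ⋯ σ_{i+1}⁻¹ σ_i⁻¹`. -/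
def bkl (n i j : ℕ) : BraidGroup n :=
  (((List.range (j - 1 - i)).map fun t => braidGen' n (i + t)).prod) *
    braidGen' n (j - 1) *
    (((List.range (j - 1 - i)).map fun t => braidGen' n (i + t)).prod)⁻¹

/-- The strand index `i` as an element of `Fin n` (from `i : Fin (n-1)`). -/
def finLo {n : ℕ} (i : Fin (n - 1)) : Fin n := ⟨i, by have := i.isLt; omega⟩

/-- The strand index `i+1` as an element of `Fin n` (from `i : Fin (n-1)`). -/
def finHi {n : ℕ} (i : Fin (n - 1)) : Fin n := ⟨(i : ℕ) + 1, by have := i.isLt; omega⟩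

/-- The Hurwitz move corresponding to the braid generator `σ_i`:
`σ_i · (g_1,…,g_n) = (g_1,…,g_{i-1}, g_{i+1}, g_{i+1}⁻¹ g_i g_{i+1}, g_{i+2},…,g_n)`. -/
def hurwitzMove {G : Type*} [Group G] {n : ℕ} (i : Fin (n - 1)) (g : Fin n → G) :
    Fin n → G := fun k =>
  if k = finLo i then g (finHi i)
  else if k = finHi i then (g (finHi i))⁻¹ * g (finLo i) * g (finHi i)
  else g k

/-!
Both sides are invariant under the Hurwitz action: a move preserves the product and permutes the
conjugacy classes of the entries. Conversely, write each entry as `f_k = w_k⁻¹ x_k w_k` with the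
word `w_k⁻¹ x_k w_k` reduced, and induct on the total length `∑ |f_k|`. If `w_i` ends with
`x_{i+1}⁻¹ w_{i+1}`, or `w_{i+1}` ends with `x_i w_i`, then `σ_i`, resp. `σ_i⁻¹`, shortens the tuple.
Otherwise, in the product `f_1 ⋯ f_n` all cancellation between neighbours happens inside common
suffixes of their conjugating words, so every letter `x_k` survives: the reduced product has length
at least `n`, with equality only if all `w_k` are empty. As `u_1 ⋯ u_n` has length `n`, `f` is then
a tuple of generators spelling the same positive word as `u`, so `f = u`.
-/

namespace List

variable {β : Type*} {d l p p' v v' : List β} {y y' : β}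

theorem suffix_or_cons_suffix_of_suffix (hd : d <:+ l) (hv : y :: v <:+ l) :
    d <:+ v ∨ y :: v <:+ d := by
  rcases suffix_or_suffix_of_suffix hd hv with h | h
  · rcases suffix_cons_iff.1 h with rfl | h
    · exact Or.inr (suffix_refl _)
    · exact Or.inl h
  · exact Or.inr h

theorem cons_suffix_or_cons_suffix_of_ne (hv : y :: v <:+ l) (hv' : y' :: v' <:+ l)
    (hy : y ≠ y') : y :: v <:+ v' ∨ y' :: v' <:+ v := by
  refine (suffix_or_cons_suffix_of_suffix hv hv').imp_right fun h => ?_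
  rcases suffix_cons_iff.1 h with h | h
  · exact absurd (cons.inj h).1.symm hy
  · exact h

theorem suffix_of_suffix_append_cons (hy : y ≠ y') (hd : d <:+ p ++ y :: v)
    (hd' : d <:+ p' ++ y' :: v') (hv : ¬ y :: v <:+ v') (hv' : ¬ y' :: v' <:+ v) : d <:+ v := by
  refine (suffix_or_cons_suffix_of_suffix hd (suffix_append _ _)).resolve_right fun h => ?_
  rcases cons_suffix_or_cons_suffix_of_ne (h.trans hd') (suffix_append _ _) hy with h | h
  exacts [hv h, hv' h]

end List

namespace FreeGroup

variable {α : Type*}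

theorem isReduced_invRev_iff {L : List (α × Bool)} : IsReduced (invRev L) ↔ IsReduced L := by
  classical
  simp only [isReduced_iff_reduce_eq, reduce_invRev, invRev_injective.eq_iff]

theorem IsReduced.exists_append_invRev_append {s t : List (α × Bool)} (hs : IsReduced s)
    (ht : IsReduced t) : ∃ a d b, s = a ++ d ∧ t = invRev d ++ b ∧ IsReduced (a ++ b) := by
  induction t generalizing s with
  | nil => exact ⟨s, [], [], by simp, by simp [invRev], by simpa⟩
  | cons y t ih =>
    rcases s.eq_nil_or_concat' with rfl | ⟨s, z, rfl⟩
    · exact ⟨[], [], y :: t, by simp, by simp [invRev], by simpa⟩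
    by_cases hzy : z = (y.1, !y.2)
    · subst hzy
      obtain ⟨a, d, b, rfl, rfl, hab⟩ :=
        ih (hs.infix ⟨[], [_], rfl⟩) (ht.infix ⟨[y], [], by simp⟩)
      exact ⟨a, d ++ [(y.1, !y.2)], b, by simp, by simp [invRev], hab⟩
    · refine ⟨s ++ [z], [], y :: t, by simp, by simp [invRev], ?_⟩
      refine List.isChain_append.2 ⟨hs, ht, ?_⟩
      simp only [List.getLast?_concat, Option.mem_some_iff, List.head?_cons, forall_eq']
      intro h
      obtain ⟨z1, z2⟩ := z
      cases z2 <;> cases hy2 : y.2 <;> simp_all [Prod.ext_iff]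

theorem exists_toWord_mul [DecidableEq α] (g h : FreeGroup α) :
    ∃ a d b, g.toWord = a ++ d ∧ h.toWord = invRev d ++ b ∧ (g * h).toWord = a ++ b := by
  obtain ⟨a, d, b, hg, hh, hab⟩ :=
    (isReduced_toWord (x := g)).exists_append_invRev_append (isReduced_toWord (x := h))
  refine ⟨a, d, b, hg, hh, ?_⟩
  have hmk : g * h = mk (a ++ b) := by
    rw [← mk_toWord (x := g), ← mk_toWord (x := h), hg, hh]
    simp only [← mul_mk, ← inv_mk]
    group
  rw [hmk, toWord_mk, hab.reduce_eq]

def conjWord (w : List (α × Bool)) (x : α) : List (α × Bool) := invRev w ++ (x, true) :: w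

theorem mk_conjWord (w : List (α × Bool)) (x : α) :
    mk (conjWord w x) = (mk w)⁻¹ * of x * mk w := by
  rw [conjWord, inv_mk, mul_assoc, of, mul_mk, mul_mk]
  rfl

theorem isReduced_conjWord {w : List (α × Bool)} {x : α} (htrue : IsReduced ((x, true) :: w))
    (hfalse : IsReduced ((x, false) :: w)) : IsReduced (conjWord w x) := by
  have hleft : IsReduced (invRev w ++ [(x, true)]) := by
    simpa [invRev] using isReduced_invRev_iff.2 hfalse
  simpa [conjWord] using hleft.append_overlap htrue (List.cons_ne_nil _ _)

theorem exists_toWord_eq_conjWord [DecidableEq α] {x : α} {g : FreeGroup α}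
    (h : IsConj (of x) g) : ∃ w, g.toWord = conjWord w x := by
  obtain ⟨c, rfl⟩ := isConj_iff.1 h
  suffices ∀ (L : List (α × Bool)) (c : FreeGroup α), c.toWord = L →
      ∃ w, (c⁻¹ * of x * c).toWord = conjWord w x by
    simpa using this _ c⁻¹ rfl
  intro L
  induction L with
  | nil =>
    intro c hc
    rw [toWord_eq_nil_iff.1 hc]
    exact ⟨[], by simp [conjWord, invRev]⟩
  | cons y r ih =>
    intro c hc
    obtain ⟨y, b⟩ := y
    by_cases hy : y = x
    · subst hy
      have hr : (mk r).toWord = r := by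
        have hsub : r <:+: c.toWord := ⟨[(y, b)], [], by simp [hc]⟩
        rw [toWord_mk, (isReduced_toWord.infix hsub).reduce_eq]
      obtain ⟨w, hw⟩ := ih (mk r) hr
      refine ⟨w, ?_⟩
      have hcr : c = mk [(y, b)] * mk r := by rw [mul_mk, List.singleton_append, ← hc, mk_toWord]
      rw [← hw, hcr]
      cases b
      · change (((of y)⁻¹ * mk r)⁻¹ * of y * ((of y)⁻¹ * mk r)).toWord = _
        group
      · change ((of y * mk r)⁻¹ * of y * (of y * mk r)).toWord = _
        group
    · refine ⟨c.toWord, ?_⟩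
      have hred : ∀ b', IsReduced ((x, b') :: c.toWord) := fun b' => by
        rw [hc]
        exact isReduced_cons_cons.2 ⟨fun h => absurd h.symm hy, hc ▸ isReduced_toWord⟩
      rw [← mk_toWord (x := c), ← mk_conjWord, toWord_mk, mk_toWord,
        (isReduced_conjWord (hred true) (hred false)).reduce_eq]

/-- For neighbours `f = (mk w)⁻¹ * of x * mk w` and `f' = (mk w')⁻¹ * of x' * mk w'`, the Hurwitz
move `(f, f') ↦ (f', f'⁻¹ * f * f')` (first case) or its inverse `(f, f') ↦ (f * f' * f⁻¹, f)`
(second case) replaces the longer conjugating word by a strictly shorter one. -/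
def HurwitzShortens (w : List (α × Bool)) (x : α) (w' : List (α × Bool)) (x' : α) : Prop :=
  (x', false) :: w' <:+ w ∨ (x, true) :: w <:+ w'

theorem exists_toWord_mul_of_not_hurwitzShortens [DecidableEq α] {g P : FreeGroup α}
    {w w' q : List (α × Bool)} {x x' : α} (hg : g.toWord = conjWord w x)
    (hP : P.toWord = invRev w' ++ (x', true) :: q) (h : ¬ HurwitzShortens w x w' x') :
    ∃ w₁ w₂ d, w = w₁ ++ d ∧ w' = w₂ ++ d ∧
      (g * P).toWord = invRev w ++ (x, true) :: (w₁ ++ invRev w₂ ++ (x', true) :: q) := by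
  obtain ⟨a, d, b, hgad, hPdb, hab⟩ := exists_toWord_mul g P
  have hd : d <:+ invRev w ++ (x, true) :: w := ⟨a, by rw [← conjWord, ← hg, hgad]⟩
  have hd' : d <:+ invRev q ++ (x', false) :: w' := by
    have h' := congrArg invRev (hPdb.symm.trans hP)
    rw [invRev_append, invRev_invRev, invRev_append, invRev_invRev, invRev_cons] at h'
    exact ⟨invRev b, h'.trans (List.append_assoc _ _ _)⟩
  simp only [HurwitzShortens, not_or] at h
  -- If `d` were longer than `w` (or `w'`) it would end with `(x, true) :: w` (or
  -- `(x', false) :: w'`), and comparing suffixes of `d` would give a shortening move.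
  obtain ⟨w₁, rfl⟩ := List.suffix_of_suffix_append_cons (by simp) hd hd' h.2 h.1
  obtain ⟨w₂, rfl⟩ := List.suffix_of_suffix_append_cons (by simp) hd' hd h.1 h.2
  refine ⟨w₁, w₂, d, rfl, rfl, ?_⟩
  have ha : a = invRev (w₁ ++ d) ++ (x, true) :: w₁ :=
    List.append_cancel_right (bs := d) (by rw [← hgad, hg, conjWord]; simp)
  have hb : b = invRev w₂ ++ (x', true) :: q :=
    List.append_cancel_left (as := invRev d) (by rw [← hPdb, hP, invRev_append]; simp)
  rw [hab, ha, hb]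
  simp

section chain

variable [DecidableEq α] {ι : Type*} {f : ι → FreeGroup α} {w : ι → List (α × Bool)}
  {x : ι → α}

theorem exists_toWord_prod_cons_eq (hf : ∀ i, (f i).toWord = conjWord (w i) (x i)) (i : ι)
    (L : List ι) (hL : (i :: L).IsChain fun j k => ¬ HurwitzShortens (w j) (x j) (w k) (x k)) :
    ∃ q, ((i :: L).map f).prod.toWord = invRev (w i) ++ (x i, true) :: q ∧
      L.length ≤ q.length ∧ (q.length = L.length → ∀ j ∈ i :: L, w j = []) := by
  induction L generalizing i with
  | nil =>
    refine ⟨w i, by simpa [conjWord] using hf i, Nat.zero_le _, fun h j hj => ?_⟩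
    rw [List.mem_singleton.1 hj]
    simpa using h
  | cons k L ih =>
    rw [List.isChain_cons_cons] at hL
    obtain ⟨q, hq, hlen, heq⟩ := ih k hL.2
    obtain ⟨w₁, w₂, d, hw, hw', hprod⟩ :=
      exists_toWord_mul_of_not_hurwitzShortens (hf i) hq hL.1
    refine ⟨w₁ ++ invRev w₂ ++ (x k, true) :: q, by simpa using hprod, by simp; omega,
      fun h => ?_⟩
    simp only [List.length_append, invRev_length, List.length_cons] at h
    have hrest := heq (by omega)
    have hd : d = [] := by
      have hlen' := congrArg List.length hw'
      rw [hrest k List.mem_cons_self, List.length_append] at hlen'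
      exact List.eq_nil_of_length_eq_zero (by simp at hlen'; omega)
    have hw₁ : w₁ = [] := List.eq_nil_of_length_eq_zero (by omega)
    simp only [List.mem_cons, forall_eq_or_imp] at hrest ⊢
    exact ⟨by rw [hw, hw₁, hd]; rfl, hrest⟩

theorem forall_eq_nil_of_norm_prod_le (hf : ∀ i, (f i).toWord = conjWord (w i) (x i))
    (L : List ι) (hL : L.IsChain fun j k => ¬ HurwitzShortens (w j) (x j) (w k) (x k))
    (h : (L.map f).prod.norm ≤ L.length) : ∀ j ∈ L, w j = [] := by
  cases L with
  | nil => simp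
  | cons i L =>
    obtain ⟨q, hq, hlen, heq⟩ := exists_toWord_prod_cons_eq hf i L hL
    rw [norm, hq] at h
    simp only [List.length_append, invRev_length, List.length_cons] at h
    exact heq (by omega)

end chain

theorem toWord_prod_map_of [DecidableEq α] (l : List α) :
    (l.map of).prod.toWord = l.map fun a => (a, true) := by
  have hmk : (l.map of).prod = mk (l.map fun a => (a, true)) := by
    induction l with
    | nil => rfl
    | cons a l ih => rw [List.map_cons, List.prod_cons, ih, of, mul_mk]; rfl
  rw [hmk, toWord_mk, IsReduced.reduce_eq]
  exact List.isChain_map _ |>.2 (List.pairwise_of_forall fun _ _ _ => rfl).isChain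

theorem norm_conj_lt_of_cons_false_suffix [DecidableEq α] {w v : List (α × Bool)} {x y : α}
    (h : (y, false) :: v <:+ w) :
    ((mk (conjWord v y))⁻¹ * mk (conjWord w x) * mk (conjWord v y)).norm <
      (conjWord w x).length := by
  obtain ⟨z, rfl⟩ := h
  have hconj : (mk (conjWord v y))⁻¹ * mk (conjWord (z ++ (y, false) :: v) x) * mk (conjWord v y)
      = mk (conjWord (z ++ v) x) := by
    have hcons : mk ((y, false) :: v) = (of y)⁻¹ * mk v := by
      rw [← List.singleton_append, ← mul_mk]; rfl
    simp only [mk_conjWord, ← mul_mk, hcons]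
    group
  rw [hconj]
  refine (norm_mk_le).trans_lt ?_
  simp [conjWord, invRev_length]
  omega

theorem norm_conj_lt_of_cons_true_suffix [DecidableEq α] {w v : List (α × Bool)} {x y : α}
    (h : (y, true) :: v <:+ w) :
    (mk (conjWord v y) * mk (conjWord w x) * (mk (conjWord v y))⁻¹).norm <
      (conjWord w x).length := by
  obtain ⟨z, rfl⟩ := h
  have hconj : mk (conjWord v y) * mk (conjWord (z ++ (y, true) :: v) x) * (mk (conjWord v y))⁻¹
      = mk (conjWord (z ++ v) x) := by
    have hcons : mk ((y, true) :: v) = of y * mk v := by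
      rw [← List.singleton_append, ← mul_mk]; rfl
    simp only [mk_conjWord, ← mul_mk, hcons]
    group
  rw [hconj]
  refine (norm_mk_le).trans_lt ?_
  simp [conjWord, invRev_length]
  omega

end FreeGroup

theorem sum_lt_sum_of_le_comp_perm {ι M : Type*} [Fintype ι] [AddCommMonoid M] [Preorder M]
    [IsOrderedCancelAddMonoid M] [AddLeftStrictMono M] {φ ψ : ι → M} (σ : Equiv.Perm ι)
    (hle : ∀ k, φ k ≤ ψ (σ k)) (hlt : ∃ k, φ k < ψ (σ k)) :
    ∑ k, φ k < ∑ k, ψ k := by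
  rw [← Equiv.sum_comp σ ψ]
  obtain ⟨k, hk⟩ := hlt
  exact Finset.sum_lt_sum (fun k _ => hle k) ⟨k, Finset.mem_univ _, hk⟩

theorem MonoidHom.apply_iff_of_closure_eq_top {H X : Type*} [Group H] {s : Set H}
    (hs : Subgroup.closure s = ⊤) (ρ : H →* Equiv.Perm X) {P : X → Prop}
    (h : ∀ g ∈ s, ∀ x, P (ρ g x) ↔ P x) (g : H) (x : X) : P (ρ g x) ↔ P x := by
  have hg : g ∈ Subgroup.closure s := hs ▸ Subgroup.mem_top g
  induction hg using Subgroup.closure_induction generalizing x with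
  | mem g hg => exact h g hg x
  | one => simp
  | mul a b _ _ ha hb => rw [map_mul, Equiv.Perm.mul_apply]; exact (ha _).trans (hb _)
  | inv a _ ha => simpa using (ha (ρ a⁻¹ x)).symm

section Hurwitz

variable {G : Type*} [Group G] {n : ℕ}

theorem finLo_ne_finHi (i : Fin (n - 1)) : finLo (n := n) i ≠ finHi i := by
  simp [finLo, finHi, Fin.ext_iff]

theorem hurwitzMove_finHi (i : Fin (n - 1)) (g : Fin n → G) :
    hurwitzMove i g (finHi i) = (g (finHi i))⁻¹ * g (finLo i) * g (finHi i) := by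
  simp [hurwitzMove, (finLo_ne_finHi i).symm]

theorem hurwitzMove_of_ne_finHi (i : Fin (n - 1)) (g : Fin n → G) {k : Fin n}
    (hk : k ≠ finHi i) : hurwitzMove i g k = g (Equiv.swap (finLo i) (finHi i) k) := by
  unfold hurwitzMove
  split_ifs with hlo
  · simp [hlo]
  · rw [Equiv.swap_apply_of_ne_of_ne hlo hk]

def hurwitzMoveInv (i : Fin (n - 1)) (g : Fin n → G) : Fin n → G := fun k =>
  if k = finLo i then g (finLo i) * g (finHi i) * (g (finLo i))⁻¹
  else if k = finHi i then g (finLo i)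
  else g k

theorem hurwitzMoveInv_finLo (i : Fin (n - 1)) (g : Fin n → G) :
    hurwitzMoveInv i g (finLo i) = g (finLo i) * g (finHi i) * (g (finLo i))⁻¹ := by
  simp [hurwitzMoveInv]

theorem hurwitzMoveInv_of_ne_finLo (i : Fin (n - 1)) (g : Fin n → G) {k : Fin n}
    (hk : k ≠ finLo i) : hurwitzMoveInv i g k = g (Equiv.swap (finLo i) (finHi i) k) := by
  unfold hurwitzMoveInv
  rw [if_neg hk]
  split_ifs with hhi
  · rw [hhi, Equiv.swap_apply_right]
  · rw [Equiv.swap_apply_of_ne_of_ne hk hhi]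

theorem hurwitzMove_hurwitzMoveInv (i : Fin (n - 1)) (g : Fin n → G) :
    hurwitzMove i (hurwitzMoveInv i g) = g := by
  funext k
  by_cases hk : k = finHi i
  · subst hk
    rw [hurwitzMove_finHi, hurwitzMoveInv_finLo,
      hurwitzMoveInv_of_ne_finLo _ _ (finLo_ne_finHi i).symm, Equiv.swap_apply_right]
    group
  · have hk' : Equiv.swap (finLo i) (finHi i) k ≠ finLo i := by
      rwa [Ne, Equiv.swap_apply_eq_iff, Equiv.swap_apply_left]
    rw [hurwitzMove_of_ne_finHi _ _ hk, hurwitzMoveInv_of_ne_finLo _ _ hk',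
      Equiv.swap_apply_self]

theorem prod_ofFn_eq_of_mul_eq {g g' : Fin n → G} (j : ℕ) (hj : j + 1 < n)
    (hne : ∀ k : Fin n, (k : ℕ) ≠ j → (k : ℕ) ≠ j + 1 → g' k = g k)
    (hmul : g' ⟨j, by omega⟩ * g' ⟨j + 1, hj⟩ = g ⟨j, by omega⟩ * g ⟨j + 1, hj⟩) :
    (List.ofFn g').prod = (List.ofFn g).prod := by
  induction n generalizing j with
  | zero => omega
  | succ n ih =>
    rw [List.ofFn_succ, List.ofFn_succ, List.prod_cons, List.prod_cons]
    cases j with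
    | zero =>
      obtain ⟨n, rfl⟩ : ∃ n', n = n' + 1 := ⟨n - 1, by omega⟩
      rw [List.ofFn_succ, List.ofFn_succ, List.prod_cons, List.prod_cons, ← mul_assoc,
        ← mul_assoc]
      exact congrArg₂ (· * ·) hmul
        (congrArg _ (List.ofFn_inj.2 (funext fun k => hne _ (by simp) (by simp))))
    | succ j =>
      rw [hne 0 (by simp) (by simp)]
      exact congrArg _ (ih j (by omega) (fun k h₁ h₂ => hne k.succ (by simpa using h₁)
        (by simpa using h₂)) hmul)

theorem prod_ofFn_hurwitzMove (i : Fin (n - 1)) (g : Fin n → G) :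
    (List.ofFn (hurwitzMove i g)).prod = (List.ofFn g).prod := by
  refine prod_ofFn_eq_of_mul_eq i (by omega) (fun k h₁ h₂ => ?_) ?_
  · have hlo : k ≠ finLo i := fun h => h₁ (by simp [h, finLo])
    have hhi : k ≠ finHi i := fun h => h₂ (by simp [h, finHi])
    rw [hurwitzMove_of_ne_finHi _ _ hhi, Equiv.swap_apply_of_ne_of_ne hlo hhi]
  · change hurwitzMove i g (finLo i) * hurwitzMove i g (finHi i) = g (finLo i) * g (finHi i)
    rw [hurwitzMove_of_ne_finHi _ _ (finLo_ne_finHi i), Equiv.swap_apply_left,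
      hurwitzMove_finHi]
    group

theorem isConj_hurwitzMove (i : Fin (n - 1)) (g : Fin n → G) (k : Fin n) :
    IsConj (g (Equiv.swap (finLo i) (finHi i) k)) (hurwitzMove i g k) := by
  by_cases hk : k = finHi i
  · subst hk
    rw [hurwitzMove_finHi, Equiv.swap_apply_right]
    exact isConj_iff.2 ⟨(g (finHi i))⁻¹, by group⟩
  · rw [hurwitzMove_of_ne_finHi _ _ hk]

theorem sum_hurwitzMove_lt {M : Type*} [AddCommMonoid M] [Preorder M]
    [IsOrderedCancelAddMonoid M] [AddLeftStrictMono M] (φ : G → M) (i : Fin (n - 1))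
    (g : Fin n → G) (h : φ (hurwitzMove i g (finHi i)) < φ (g (finLo i))) :
    ∑ k, φ (hurwitzMove i g k) < ∑ k, φ (g k) := by
  refine sum_lt_sum_of_le_comp_perm (Equiv.swap (finLo i) (finHi i)) (fun k => ?_)
    ⟨finHi i, by rwa [Equiv.swap_apply_right]⟩
  by_cases hk : k = finHi i
  · subst hk
    rw [Equiv.swap_apply_right]
    exact h.le
  · rw [hurwitzMove_of_ne_finHi _ _ hk]

theorem sum_hurwitzMoveInv_lt {M : Type*} [AddCommMonoid M] [Preorder M]
    [IsOrderedCancelAddMonoid M] [AddLeftStrictMono M] (φ : G → M) (i : Fin (n - 1))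
    (g : Fin n → G) (h : φ (hurwitzMoveInv i g (finLo i)) < φ (g (finHi i))) :
    ∑ k, φ (hurwitzMoveInv i g k) < ∑ k, φ (g k) := by
  refine sum_lt_sum_of_le_comp_perm (Equiv.swap (finLo i) (finHi i)) (fun k => ?_)
    ⟨finLo i, by rwa [Equiv.swap_apply_left]⟩
  by_cases hk : k = finLo i
  · subst hk
    rw [Equiv.swap_apply_left]
    exact h.le
  · rw [hurwitzMoveInv_of_ne_finLo _ _ hk]

def SameHurwitzInvariants (u g : Fin n → G) : Prop :=
  (List.ofFn g).prod = (List.ofFn u).prod ∧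
    ∃ τ : Equiv.Perm (Fin n), ∀ k, IsConj (u (τ k)) (g k)

theorem sameHurwitzInvariants_hurwitzMove_iff (u g : Fin n → G) (i : Fin (n - 1)) :
    SameHurwitzInvariants u (hurwitzMove i g) ↔ SameHurwitzInvariants u g := by
  unfold SameHurwitzInvariants
  rw [prod_ofFn_hurwitzMove]
  set σ := Equiv.swap (finLo i) (finHi i)
  refine and_congr_right fun _ => ⟨fun ⟨τ, hτ⟩ => ⟨σ.trans τ, fun k => ?_⟩,
    fun ⟨τ, hτ⟩ => ⟨σ.trans τ, fun k => ?_⟩⟩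
  · simpa [σ] using (hτ _).trans (isConj_hurwitzMove i g (σ k)).symm
  · exact (hτ _).trans (isConj_hurwitzMove i g k)

theorem sameHurwitzInvariants_braid_apply_iff
    (ρ : BraidGroup n →* Equiv.Perm (Fin n → G))
    (hρ : ∀ (i : Fin (n - 1)) (g : Fin n → G), ρ (braidGen i) g = hurwitzMove i g)
    (u g : Fin n → G) (b : BraidGroup n) :
    SameHurwitzInvariants u (ρ b g) ↔ SameHurwitzInvariants u g := by
  refine MonoidHom.apply_iff_of_closure_eq_top (PresentedGroup.closure_range_of _) ρ ?_ b g
  rintro _ ⟨i, rfl⟩ g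
  exact (hρ i g).symm ▸ sameHurwitzInvariants_hurwitzMove_iff u g i

end Hurwitz

section

open FreeGroup

variable {α : Type*} [DecidableEq α] {n : ℕ}

theorem exists_braid_sum_norm_lt (ρ : BraidGroup n →* Equiv.Perm (Fin n → FreeGroup α))
    (hρ : ∀ (i : Fin (n - 1)) (g : Fin n → FreeGroup α), ρ (braidGen i) g = hurwitzMove i g)
    {f : Fin n → FreeGroup α} {w : Fin n → List (α × Bool)} {x : Fin n → α}
    (hf : ∀ k, (f k).toWord = conjWord (w k) (x k)) (i : Fin (n - 1))
    (h : HurwitzShortens (w (finLo i)) (x (finLo i)) (w (finHi i)) (x (finHi i))) :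
    ∃ c, ∑ k, (ρ c f k).norm < ∑ k, (f k).norm := by
  have hmk : ∀ k, f k = mk (conjWord (w k) (x k)) := fun k => by rw [← hf, mk_toWord]
  have hnorm : ∀ k, (f k).norm = (conjWord (w k) (x k)).length :=
    fun k => congrArg List.length (hf k)
  rcases h with h | h
  · refine ⟨braidGen i, ?_⟩
    simp only [hρ]
    refine sum_hurwitzMove_lt _ i f ?_
    rw [hurwitzMove_finHi, hnorm, hmk (finLo i), hmk (finHi i)]
    exact norm_conj_lt_of_cons_false_suffix h
  · refine ⟨(braidGen i)⁻¹, ?_⟩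
    have hinv : ρ (braidGen i)⁻¹ f = hurwitzMoveInv i f := by
      rw [_root_.map_inv, Equiv.Perm.inv_eq_iff_eq, hρ, hurwitzMove_hurwitzMoveInv]
    rw [hinv]
    refine sum_hurwitzMoveInv_lt _ i f ?_
    rw [hurwitzMoveInv_finLo, hnorm, hmk (finLo i), hmk (finHi i)]
    exact norm_conj_lt_of_cons_true_suffix h

theorem toWord_prod_ofFn_of (s : Fin n → α) :
    (List.ofFn fun k => of (s k)).prod.toWord = List.ofFn fun k => (s k, true) := by
  simpa [List.map_ofFn, Function.comp_def] using toWord_prod_map_of (List.ofFn s)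

theorem eq_of_forall_not_hurwitzShortens {f : Fin n → FreeGroup α}
    {w : Fin n → List (α × Bool)} {x : Fin n → α}
    (hf : ∀ k, (f k).toWord = conjWord (w k) (x k)) (s : Fin n → α)
    (hns : ∀ i : Fin (n - 1),
      ¬ HurwitzShortens (w (finLo i)) (x (finLo i)) (w (finHi i)) (x (finHi i)))
    (hprod : (List.ofFn f).prod = (List.ofFn fun k => of (s k)).prod) :
    f = fun k => of (s k) := by
  have hchain : (List.finRange n).IsChain
      fun j k => ¬ HurwitzShortens (w j) (x j) (w k) (x k) := by
    rw [← List.ofFn_id, List.isChain_ofFn]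
    exact fun i hi => hns ⟨i, by omega⟩
  have hw : ∀ k, w k = [] := fun k => by
    refine forall_eq_nil_of_norm_prod_le hf _ hchain ?_ k (List.mem_finRange k)
    rw [← List.ofFn_eq_map, hprod, FreeGroup.norm, toWord_prod_ofFn_of]
    simp
  have hfx : f = fun k => of (x k) :=
    funext fun k => toWord_injective (by rw [hf, hw, toWord_of]; rfl)
  subst hfx
  have hxs := List.ofFn_injective <| by simpa only [toWord_prod_ofFn_of] using congrArg toWord hprod
  funext k
  have hk := congrFun hxs k
  simp only [Prod.mk.injEq, and_true] at hk
  rw [hk]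

theorem exists_braid_apply_eq_of_sameHurwitzInvariants (s : Fin n → α)
    (ρ : BraidGroup n →* Equiv.Perm (Fin n → FreeGroup α))
    (hρ : ∀ (i : Fin (n - 1)) (g : Fin n → FreeGroup α), ρ (braidGen i) g = hurwitzMove i g)
    (f : Fin n → FreeGroup α) (hf : SameHurwitzInvariants (fun k => of (s k)) f) :
    ∃ b, ρ b (fun k => of (s k)) = f := by
  induction hN : ∑ k, (f k).norm using Nat.strong_induction_on generalizing f with
  | _ N ih =>
  obtain ⟨hprod, τ, hτ⟩ := hf
  choose w hw using fun k => exists_toWord_eq_conjWord (hτ k)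
  by_cases hshort : ∃ i : Fin (n - 1), HurwitzShortens (w (finLo i)) (s (τ (finLo i)))
      (w (finHi i)) (s (τ (finHi i)))
  · obtain ⟨i, hi⟩ := hshort
    obtain ⟨c, hc⟩ := exists_braid_sum_norm_lt ρ hρ (x := fun k => s (τ k)) hw i hi
    obtain ⟨b, hb⟩ := ih _ (hN ▸ hc) (ρ c f)
      ((sameHurwitzInvariants_braid_apply_iff ρ hρ _ f c).2 ⟨hprod, τ, hτ⟩) rfl
    exact ⟨c⁻¹ * b, by
      rw [_root_.map_mul, Equiv.Perm.mul_apply, hb]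
      simp⟩
  · push Not at hshort
    refine ⟨1, ?_⟩
    rw [_root_.map_one]
    exact (eq_of_forall_not_hurwitzShortens hw s hshort hprod).symm

end

theorem hurwitz_orbit_eq_general {m n : ℕ}
    (u : Fin n → FreeGroup (Fin m)) (hu : ∀ k, ∃ s, u k = FreeGroup.of s)
    (ρ : BraidGroup n →* Equiv.Perm (Fin n → FreeGroup (Fin m)))
    (hρ : ∀ (i : Fin (n - 1)) (g : Fin n → FreeGroup (Fin m)),
      ρ (braidGen i) g = hurwitzMove i g) :
    {f : Fin n → FreeGroup (Fin m) | ∃ b : BraidGroup n, ρ b u = f} =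
      {f : Fin n → FreeGroup (Fin m) |
        (List.ofFn f).prod = (List.ofFn u).prod ∧
        ∃ τ : Equiv.Perm (Fin n), ∀ k, IsConj (u (τ k)) (f k)} := by
  choose s hs using hu
  obtain rfl : u = fun k => FreeGroup.of (s k) := funext hs
  ext f
  refine ⟨?_, exists_braid_apply_eq_of_sameHurwitzInvariants s ρ hρ f⟩
  rintro ⟨b, rfl⟩
  exact (sameHurwitzInvariants_braid_apply_iff ρ hρ _ _ b).2 ⟨rfl, 1, fun k => IsConj.refl _⟩

/-- **Theorem (orbit description).** Let `F_m` be the free group on `x_1,…,x_m`, `n ≥ 1`,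
and `u_1,…,u_n` generators. The orbit of `u` under the Hurwitz action of `B_n` on `F_m^n`
(given by the homomorphism `ρ` with `ρ(σ_i) = hurwitzMove i`) is exactly the set of tuples
`f` with `f_1⋯f_n = u_1⋯u_n` and such that, for some permutation `τ`, `f_k` is conjugate to
`u_{τ(k)}` for all `k`. -/
theorem hurwitz_orbit_eq {m n : ℕ} (hn : 1 ≤ n)
    (u : Fin n → FreeGroup (Fin m)) (hu : ∀ k, ∃ s, u k = FreeGroup.of s)
    (ρ : BraidGroup n →* Equiv.Perm (Fin n → FreeGroup (Fin m)))
    (hρ : ∀ (i : Fin (n - 1)) (g : Fin n → FreeGroup (Fin m)),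
      ρ (braidGen i) g = hurwitzMove i g) :
    {f : Fin n → FreeGroup (Fin m) | ∃ b : BraidGroup n, ρ b u = f} =
      {f : Fin n → FreeGroup (Fin m) |
        (List.ofFn f).prod = (List.ofFn u).prod ∧
        ∃ τ : Equiv.Perm (Fin n), ∀ k, IsConj (u (τ k)) (f k)} :=
  hurwitz_orbit_eq_general u hu ρ hρ
end

section
/- Let G be a group, n ≥ 1, and g ∈ G^n. The Young subgroup B_{Q^g}, generated by all Birman–Ko–Lee generators a_{ij} with g_i = g_j, is contained in the stabilizer of g under the Hurwitz action of B_n on G^n. -/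
section HurwitzMove

variable {G : Type*} [Group G] {n : ℕ}

theorem hurwitzMove_apply_finLo (i : Fin (n - 1)) (x : Fin n → G) :
    hurwitzMove i x (finLo i) = x (finHi i) := by
  simp [hurwitzMove]

theorem hurwitzMove_apply_of_ne {i : Fin (n - 1)} (x : Fin n → G) {k : Fin n}
    (hlo : k ≠ finLo i) (hhi : k ≠ finHi i) : hurwitzMove i x k = x k := by
  simp [hurwitzMove, hlo, hhi]

theorem hurwitzMove_eq_self {i : Fin (n - 1)} {x : Fin n → G} (h : x (finLo i) = x (finHi i)) :
    hurwitzMove i x = x := by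
  funext k
  unfold hurwitzMove
  split_ifs with hlo hhi
  · rw [hlo, h]
  · rw [hhi, h]; group
  · rfl

end HurwitzMove

theorem braidGen'_of_lt {n k : ℕ} (h : k < n - 1) : braidGen' n k = braidGen ⟨k, h⟩ :=
  dif_pos h

def braidGenProd (n i m : ℕ) : BraidGroup n :=
  ((List.range m).map fun t => braidGen' n (i + t)).prod

theorem bkl_eq_braidGenProd_conj (n i j : ℕ) :
    bkl n i j = braidGenProd n i (j - 1 - i) * braidGen' n (j - 1) *
      (braidGenProd n i (j - 1 - i))⁻¹ :=
  rfl

section HurwitzAction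

variable {G : Type*} [Group G] {n : ℕ} {ρ : BraidGroup n →* Equiv.Perm (Fin n → G)}

theorem braidGenProd_inv_apply
    (hρ : ∀ (i : Fin (n - 1)) (x : Fin n → G), ρ (braidGen i) x = hurwitzMove i x)
    (i : Fin n) (x : Fin n → G) (m : ℕ) (hm : (i : ℕ) + m < n) (l : Fin n)
    (hl : (i : ℕ) + m ≤ l) :
    (ρ (braidGenProd n i m))⁻¹ x l = if (l : ℕ) = i + m then x i else x l := by
  induction m generalizing l with
  | zero =>
    rw [braidGenProd, List.range_zero, List.map_nil, List.prod_nil, map_one, inv_one,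
      Equiv.Perm.one_apply]
    split_ifs with hl
    · rw [Fin.ext (by omega : (l : ℕ) = i)]
    · rfl
  | succ m ih =>
    have hk : (i : ℕ) + m < n - 1 := by omega
    set y := (ρ (braidGenProd n i m))⁻¹ x
    set y' := (ρ (braidGen ⟨_, hk⟩))⁻¹ y
    have hmove : hurwitzMove ⟨_, hk⟩ y' = y := by
      rw [← hρ]
      exact Equiv.apply_symm_apply _ y
    have hsplit : (ρ (braidGenProd n i (m + 1)))⁻¹ x = y' := by
      rw [braidGenProd, List.range_succ, List.map_append, List.prod_append, List.map_singleton,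
        List.prod_singleton, braidGen'_of_lt hk, map_mul, mul_inv_rev, Equiv.Perm.mul_apply]
      rfl
    rw [hsplit]
    split_ifs with hl'
    · have hhi : l = finHi ⟨_, hk⟩ := Fin.ext (by simp [finHi]; omega)
      rw [hhi, ← hurwitzMove_apply_finLo _ y', hmove, ih (by omega) _ (by simp [finLo])]
      simp [finLo]
    · have hlo : l ≠ finLo ⟨_, hk⟩ := by simp [finLo, Fin.ext_iff]; omega
      have hhi : l ≠ finHi ⟨_, hk⟩ := by simp [finHi, Fin.ext_iff]; omega
      rw [← hurwitzMove_apply_of_ne y' hlo hhi, hmove, ih (by omega) l (by omega),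
        if_neg (by omega)]

theorem bkl_apply_eq_self_of_eq
    (hρ : ∀ (i : Fin (n - 1)) (x : Fin n → G), ρ (braidGen i) x = hurwitzMove i x)
    {g : Fin n → G} {i j : Fin n} (hij : i < j) (hg : g i = g j) :
    ρ (bkl n i j) g = g := by
  have hij' : (i : ℕ) < j := hij
  have hk : (j : ℕ) - 1 < n - 1 := by omega
  set P := braidGenProd n i (j - 1 - i)
  have hfixed : hurwitzMove ⟨_, hk⟩ ((ρ P)⁻¹ g) = (ρ P)⁻¹ g := by
    apply hurwitzMove_eq_self
    have hj : finHi (⟨_, hk⟩ : Fin (n - 1)) = j := Fin.ext (by simp [finHi]; omega)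
    rw [hj, braidGenProd_inv_apply hρ i g _ (by omega) _ (by simp [finLo]; omega),
      braidGenProd_inv_apply hρ i g _ (by omega) _ (by omega), if_pos (by simp [finLo]; omega),
      if_neg (by omega), hg]
  rw [bkl_eq_braidGenProd_conj, braidGen'_of_lt hk, map_mul, map_mul, map_inv,
    Equiv.Perm.mul_apply, Equiv.Perm.mul_apply, hρ, hfixed, Equiv.Perm.coe_inv,
    Equiv.apply_symm_apply]

end HurwitzAction

theorem young_le_stabilizer_general {G : Type*} [Group G] {n : ℕ}
    (ρ : BraidGroup n →* Equiv.Perm (Fin n → G))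
    (hρ : ∀ (i : Fin (n - 1)) (x : Fin n → G), ρ (braidGen i) x = hurwitzMove i x)
    (g : Fin n → G) :
    ∀ b ∈ Subgroup.closure
        {b : BraidGroup n | ∃ i j : Fin n, i < j ∧ g i = g j ∧ b = bkl n i j},
      ρ b g = g := by
  intro b hb
  refine (Subgroup.closure_le ((MulAction.stabilizer _ g).comap ρ)).2 ?_ hb
  rintro _ ⟨i, j, hij, hg, rfl⟩
  exact bkl_apply_eq_self_of_eq hρ hij hg

/-- **Lemma.** For `g ∈ G^n`, the Young subgroup `B_{Q^g}` — the subgroup of `B_n`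
generated by all Birman–Ko–Lee generators `a_{ij}` (for strands `i < j`) with `g_i = g_j` —
is contained in the stabilizer of `g` under the Hurwitz action of `B_n` on `G^n`
(given by `ρ` with `ρ(σ_i) = hurwitzMove i`). -/
theorem young_le_stabilizer {G : Type*} [Group G] {n : ℕ} (hn : 1 ≤ n)
    (ρ : BraidGroup n →* Equiv.Perm (Fin n → G))
    (hρ : ∀ (i : Fin (n - 1)) (x : Fin n → G), ρ (braidGen i) x = hurwitzMove i x)
    (g : Fin n → G) :
    ∀ b ∈ Subgroup.closure
        {b : BraidGroup n | ∃ i j : Fin n, i < j ∧ g i = g j ∧ b = bkl n i j},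
      ρ b g = g :=
  young_le_stabilizer_general ρ hρ g
end

section
/- Let n ≥ 4 and 1 ≤ i < j < k < l ≤ n. Then the Birman–Ko–Lee generators a_{ik} and a_{jl} generate a free subgroup of B_n of rank 2; equivalently, the group homomorphism from the free group on two generators to B_n sending the generators to a_{ik} and a_{jl} is injective. -/
open Function

theorem FreeGroup.injective_of_semiconj {ι G α β : Type*} [Group G] {φ : FreeGroup ι →* G}
    (ρ : G →* Equiv.Perm α) {b : ι → Equiv.Perm β} {e : β → α} (he : Injective e)
    (hsemi : ∀ i, Semiconj e (b i) (ρ (φ (of i)))) (hb : Injective (lift b)) :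
    Injective φ := by
  have hsemi_lift : ∀ g, Semiconj e (lift b g) (ρ (φ g)) := by
    intro g
    induction g using FreeGroup.induction_on with
    | C1 => intro x; simp
    | of i => simpa using hsemi i
    | inv_of i h =>
      simp only [_root_.map_inv]
      exact h.inverses_right (Equiv.apply_symm_apply _) (Equiv.symm_apply_apply _)
    | mul g h hg hh =>
      simp only [_root_.map_mul, Equiv.Perm.coe_mul]
      exact hg.comp_right hh
  refine (injective_iff_map_eq_one φ).2 fun g hg => hb ?_
  ext x
  apply he
  rw [hsemi_lift g x, hg, _root_.map_one, _root_.map_one]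
  rfl

namespace BraidGroup

def lift {G : Type*} [Group G] (n : ℕ) (f : ℕ → G)
    (hadj : ∀ p, f p * f (p + 1) * f p = f (p + 1) * f p * f (p + 1))
    (hfar : ∀ p q, p + 2 ≤ q → f p * f q = f q * f p) : BraidGroup n →* G :=
  PresentedGroup.toGroup (f := fun i : Fin (n - 1) => f i) <| by
    rintro r ⟨i, j, ⟨hij, rfl⟩ | ⟨hij, rfl⟩⟩ <;>
      simp only [map_mul, map_inv, FreeGroup.lift_apply_of, mul_inv_eq_one]
    · rw [hij]; exact hadj i
    · exact hfar i j hij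

theorem lift_braidGen' {G : Type*} [Group G] {n : ℕ} {f : ℕ → G} {hadj hfar} {p : ℕ}
    (hp : p < n - 1) : lift n f hadj hfar (braidGen' n p) = f p := by
  rw [braidGen', dif_pos hp]
  exact PresentedGroup.toGroup.of _

end BraidGroup

theorem bkl_add_one (n p : ℕ) : bkl n p (p + 1) = braidGen' n p := by
  simp [bkl]

theorem bkl_eq_conj (n p q : ℕ) (h : p + 1 < q) :
    bkl n p q = braidGen' n p * bkl n (p + 1) q * (braidGen' n p)⁻¹ := by
  have hlen : q - 1 - p = (q - 1 - (p + 1)) + 1 := by omega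
  have hshift : (fun t => braidGen' n (p + (t + 1))) = fun t => braidGen' n (p + 1 + t) := by
    funext t; rw [Nat.add_comm t 1, Nat.add_assoc]
  simp only [bkl, hlen, List.range_succ_eq_map, List.map_cons, List.prod_cons, List.map_map,
    Function.comp_def, hshift, Nat.add_zero, mul_inv_rev]
  group

theorem pow_sub_mul_pow_sub {M : Type*} [Monoid M] (x : M) {a b c : ℕ} (hab : a ≤ b)
    (hbc : b ≤ c) : x ^ (b - a) * x ^ (c - b) = x ^ (c - a) := by
  rw [← pow_add]; congr 1; omega

section Burau

variable {K : Type*} [Field K] (t : K)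

-- The unreduced Burau matrix `[[1 - t, t], [1, 0]]` of `σ_p` in the rows `p, p + 1`; coordinates
-- are indexed by all of `ℕ`, and those `≥ n` are fixed by `B_n`.
def burauStep (p : ℕ) (x : ℕ → K) : ℕ → K := fun m =>
  if m = p then (1 - t) * x p + t * x (p + 1) else if m = p + 1 then x p else x m

def burauStepInv (p : ℕ) (x : ℕ → K) : ℕ → K := fun m =>
  if m = p then x (p + 1) else if m = p + 1 then (x p - (1 - t) * x (p + 1)) / t else x m

variable {t}

def burauGen (ht : t ≠ 0) (p : ℕ) : Equiv.Perm (ℕ → K) where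
  toFun := burauStep t p
  invFun := burauStepInv t p
  left_inv x := by
    funext m
    simp only [burauStep, burauStepInv]
    split_ifs <;> subst_vars <;> first | rfl | omega | (field_simp; ring)
  right_inv x := by
    funext m
    simp only [burauStep, burauStepInv]
    split_ifs <;> subst_vars <;> first | rfl | omega | (field_simp; ring)

theorem burauGen_braid_adj (ht : t ≠ 0) (p : ℕ) :
    burauGen ht p * burauGen ht (p + 1) * burauGen ht p =
      burauGen ht (p + 1) * burauGen ht p * burauGen ht (p + 1) := by
  ext x m
  simp only [Equiv.Perm.coe_mul, comp_apply, burauGen, Equiv.coe_fn_mk, burauStep]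
  split_ifs <;> subst_vars <;> first | rfl | omega | ring

theorem burauGen_braid_far (ht : t ≠ 0) {p q : ℕ} (h : p + 2 ≤ q) :
    burauGen ht p * burauGen ht q = burauGen ht q * burauGen ht p := by
  ext x m
  simp only [Equiv.Perm.coe_mul, comp_apply, burauGen, Equiv.coe_fn_mk, burauStep]
  split_ifs <;> first | rfl | omega

def burau (ht : t ≠ 0) (n : ℕ) : BraidGroup n →* Equiv.Perm (ℕ → K) :=
  BraidGroup.lift n (burauGen ht) (burauGen_braid_adj ht) fun _ _ => burauGen_braid_far ht

theorem burau_braidGen' (ht : t ≠ 0) {n p : ℕ} (hp : p < n - 1) :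
    burau ht n (braidGen' n p) = burauGen ht p :=
  BraidGroup.lift_braidGen' hp

end Burau

section BKLAction

variable {K : Type*} [Field K] (t : K)

def bklFunctional (p q : ℕ) (x : ℕ → K) : K :=
  -t * x p - (t - 1) * ∑ m ∈ Finset.Ico (p + 1) q, t ^ (m - p) * x m + t ^ (q - p) * x q

def bklAction (p q : ℕ) (x : ℕ → K) : ℕ → K := fun m =>
  if m = p then x p + bklFunctional t p q x
  else if m = q then x q - bklFunctional t p q x / t ^ (q - p)
  else x m

variable {t}

theorem bklAction_add_one (ht : t ≠ 0) (p : ℕ) : bklAction t p (p + 1) = burauStep t p := by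
  funext x m
  simp only [bklAction, bklFunctional, burauStep, Finset.Ico_self, Finset.sum_empty,
    Nat.add_sub_cancel_left, pow_one]
  split_ifs <;> first | omega | rfl | (field_simp; ring)

theorem bklFunctional_burauStepInv (ht : t ≠ 0) {p q : ℕ} (h : p + 1 < q) (x : ℕ → K) :
    bklFunctional t (p + 1) q (burauStepInv t p x) = bklFunctional t p q x / t := by
  have hsum : ∑ m ∈ Finset.Ico (p + 1 + 1) q, t ^ (m - (p + 1)) * burauStepInv t p x m
      = t⁻¹ * ∑ m ∈ Finset.Ico (p + 1 + 1) q, t ^ (m - p) * x m := by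
    rw [Finset.mul_sum]
    refine Finset.sum_congr rfl fun m hm => ?_
    have hm := (Finset.mem_Ico.1 hm).1
    rw [burauStepInv, if_neg (by omega), if_neg (by omega), show m - p = m - (p + 1) + 1 by omega,
      pow_succ]
    field_simp
  rw [bklFunctional, bklFunctional, hsum, Finset.sum_eq_sum_Ico_succ_bot h,
    show q - p = q - (p + 1) + 1 by omega]
  simp only [burauStepInv, if_pos, if_neg (show p + 1 ≠ p by omega), if_neg (show q ≠ p by omega),
    if_neg (show q ≠ p + 1 by omega), Nat.add_sub_cancel_left, pow_succ]
  field_simp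
  ring

theorem burauStep_bklAction_burauStepInv (ht : t ≠ 0) {p q : ℕ} (h : p + 1 < q) (x : ℕ → K) :
    burauStep t p (bklAction t (p + 1) q (burauStepInv t p x)) = bklAction t p q x := by
  have hζ := bklFunctional_burauStepInv ht h x
  have hpow : t ^ (q - p) = t ^ (q - (p + 1)) * t := by rw [← pow_succ]; congr 1; omega
  funext m
  simp only [burauStep, bklAction, burauStepInv, hζ, hpow]
  split_ifs <;> subst_vars <;> first | omega | rfl | ring1 | (field_simp; ring1)

theorem burau_bkl (ht : t ≠ 0) {n p q : ℕ} (hpq : p < q) (hq : q < n) :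
    ⇑(burau ht n (bkl n p q)) = bklAction t p q := by
  obtain ⟨d, rfl⟩ : ∃ d, q = p + d + 1 := ⟨q - p - 1, by omega⟩
  induction d generalizing p with
  | zero =>
    rw [bklAction_add_one ht, bkl_add_one, burau_braidGen' ht (by omega)]
    rfl
  | succ d ih =>
    have hconj := bkl_eq_conj n p (p + (d + 1) + 1) (by omega)
    have ih' := ih (p := p + 1) (by omega) (by omega)
    rw [show p + 1 + d + 1 = p + (d + 1) + 1 by omega] at ih'
    funext x
    rw [hconj, map_mul, map_mul, map_inv, burau_braidGen' ht (by omega),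
      ← burauStep_bklAction_burauStepInv ht (by omega), ← ih']
    rfl

end BKLAction

section CrossingPlane

variable {K : Type*} [Field K] (t : K) (i j k l : ℕ)

def bklPlane (z : K × K) : ℕ → K := fun m =>
  if m = i then t ^ (l - i) * z.1
  else if m = j then -(t ^ (l - j) * z.2)
  else if m = k then -(t ^ (l - k) * z.1)
  else if m = l then z.2
  else 0

def planeMapA (z : K × K) : K × K := (-t * z.1 + (t - 1) * z.2, z.2)

def planeMapB (z : K × K) : K × K := (z.1, -(t - 1) * z.1 - t * z.2)

variable {t i j k l} (hij : i < j) (hjk : j < k) (hkl : k < l)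
include hij hjk hkl

theorem bklFunctional_bklPlane_left (z : K × K) :
    bklFunctional t i k (bklPlane t i j k l z) =
      t ^ (l - i) * (-(t + 1) * z.1 + (t - 1) * z.2) := by
  have hsum : ∑ m ∈ Finset.Ico (i + 1) k, t ^ (m - i) * bklPlane t i j k l z m
      = t ^ (j - i) * -(t ^ (l - j) * z.2) := by
    rw [Finset.sum_eq_single_of_mem j (Finset.mem_Ico.2 ⟨hij, hjk⟩)]
    · simp only [bklPlane, if_neg hij.ne', if_true]
    · intro m hm hmj
      have hm := Finset.mem_Ico.1 hm
      simp only [bklPlane, if_neg (show m ≠ i by omega), if_neg hmj,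
        if_neg (show m ≠ k by omega), if_neg (show m ≠ l by omega), mul_zero]
  rw [bklFunctional, hsum]
  simp only [bklPlane, if_true, if_neg (show k ≠ i by omega), if_neg (show k ≠ j by omega)]
  linear_combination (t - 1) * z.2 * pow_sub_mul_pow_sub t hij.le (hjk.trans hkl).le -
    z.1 * pow_sub_mul_pow_sub t (hij.trans hjk).le hkl.le

theorem bklFunctional_bklPlane_right (z : K × K) :
    bklFunctional t j l (bklPlane t i j k l z) =
      t ^ (l - j) * ((t - 1) * z.1 + (t + 1) * z.2) := by
  have hsum : ∑ m ∈ Finset.Ico (j + 1) l, t ^ (m - j) * bklPlane t i j k l z m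
      = t ^ (k - j) * -(t ^ (l - k) * z.1) := by
    rw [Finset.sum_eq_single_of_mem k (Finset.mem_Ico.2 ⟨hjk, hkl⟩)]
    · simp only [bklPlane, if_neg (show k ≠ i by omega), if_neg hjk.ne', if_true]
    · intro m hm hmk
      have hm := Finset.mem_Ico.1 hm
      simp only [bklPlane, if_neg (show m ≠ i by omega), if_neg (show m ≠ j by omega),
        if_neg hmk, if_neg (show m ≠ l by omega), mul_zero]
  rw [bklFunctional, hsum]
  simp only [bklPlane, if_true, if_neg (show j ≠ i by omega), if_neg (show l ≠ i by omega),
    if_neg (show l ≠ j by omega), if_neg (show l ≠ k by omega)]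
  linear_combination (t - 1) * z.1 * pow_sub_mul_pow_sub t hjk.le hkl.le

theorem bklAction_bklPlane_left (ht : t ≠ 0) (z : K × K) :
    bklAction t i k (bklPlane t i j k l z) = bklPlane t i j k l (planeMapA t z) := by
  have hpow := pow_sub_mul_pow_sub t (hij.trans hjk).le hkl.le
  have hne : t ^ (k - i) ≠ 0 := pow_ne_zero _ ht
  funext m
  simp only [bklAction, bklFunctional_bklPlane_left hij hjk hkl, planeMapA]
  simp only [bklPlane]
  split_ifs <;> subst_vars <;> first | omega | rfl | ring1 | (rw [← hpow]; field_simp; ring1)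

theorem bklAction_bklPlane_right (ht : t ≠ 0) (z : K × K) :
    bklAction t j l (bklPlane t i j k l z) = bklPlane t i j k l (planeMapB t z) := by
  have hne : t ^ (l - j) ≠ 0 := pow_ne_zero _ ht
  funext m
  simp only [bklAction, bklFunctional_bklPlane_right hij hjk hkl, planeMapB]
  simp only [bklPlane]
  split_ifs <;> subst_vars <;> first | omega | rfl | ring1 | (field_simp; ring1)

theorem bklPlane_injective (ht : t ≠ 0) : Function.Injective (bklPlane t i j k l) := by
  intro z z' h
  have hi := congrFun h i
  have hl := congrFun h l
  simp only [bklPlane, if_true, if_neg (show l ≠ i by omega), if_neg (show l ≠ j by omega),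
    if_neg (show l ≠ k by omega)] at hi hl
  exact Prod.ext (mul_left_cancel₀ (pow_ne_zero _ ht) hi) hl

end CrossingPlane

section PingPong

open scoped Pointwise

variable {α : Type*} (φ ψ : α → ℚ)

-- `10 < 999 < 10 * 100`: the two cones are disjoint, and a factor `-100` on `φ` pushes the
-- complement of the repelling cone into the attracting one.
def attractingCone : Set α := {v | 999 * |ψ v| < |φ v|}

def repellingCone : Set α := {v | |φ v| < 10 * |ψ v|}

theorem disjoint_attractingCone_repellingCone :
    Disjoint (attractingCone φ ψ) (repellingCone φ ψ) :=
  Set.disjoint_left.2 fun v h₁ h₂ => by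
    simp only [attractingCone, repellingCone, Set.mem_ofPred_eq] at h₁ h₂
    linarith [abs_nonneg (ψ v)]

variable {φ ψ} {M : Equiv.Perm α} (hφ : ∀ v, φ (M v) = -100 * φ v) (hψ : ∀ v, ψ (M v) = ψ v)
  (hnd : ∀ v, φ v ≠ 0 ∨ ψ v ≠ 0)
include hφ hψ hnd

theorem smul_compl_repellingCone_subset : M • (repellingCone φ ψ)ᶜ ⊆ attractingCone φ ψ := by
  rintro _ ⟨v, hv, rfl⟩
  simp only [repellingCone, attractingCone, Set.mem_compl_iff, Set.mem_ofPred_eq, not_lt,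
    Equiv.Perm.smul_def, hφ, hψ, abs_mul] at hv ⊢
  rcases hnd v with h | h <;> have := abs_pos.2 h <;> norm_num <;> linarith

theorem inv_smul_compl_attractingCone_subset :
    M⁻¹ • (attractingCone φ ψ)ᶜ ⊆ repellingCone φ ψ := by
  rintro _ ⟨v, hv, rfl⟩
  obtain ⟨w, rfl⟩ := M.surjective v
  simp only [repellingCone, attractingCone, Set.mem_compl_iff, Set.mem_ofPred_eq, not_lt,
    Equiv.Perm.smul_def, Equiv.Perm.coe_inv, Equiv.symm_apply_apply, hφ, hψ, abs_mul] at hv ⊢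
  rcases hnd w with h | h <;> have := abs_pos.2 h <;> norm_num at hv <;> linarith

end PingPong

section RationalPingPong

open scoped Pointwise

abbrev PuncturedPlane := {v : ℚ × ℚ // v ≠ 0}

def planePermA : Equiv.Perm (ℚ × ℚ) where
  toFun := planeMapA 100
  invFun z := ((99 * z.2 - z.1) / 100, z.2)
  left_inv z := Prod.ext (by simp only [planeMapA]; ring) rfl
  right_inv z := Prod.ext (by simp only [planeMapA]; ring) rfl

def planePermB : Equiv.Perm (ℚ × ℚ) where
  toFun := planeMapB 100
  invFun z := (z.1, (-99 * z.1 - z.2) / 100)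
  left_inv z := Prod.ext rfl (by simp only [planeMapB]; ring)
  right_inv z := Prod.ext rfl (by simp only [planeMapB]; ring)

def puncturedPermA : Equiv.Perm PuncturedPlane :=
  planePermA.subtypePerm fun _ => planePermA.injective.ne_iff' (by simp [planePermA, planeMapA])

def puncturedPermB : Equiv.Perm PuncturedPlane :=
  planePermB.subtypePerm fun _ => planePermB.injective.ne_iff' (by simp [planePermB, planeMapB])

def eigenA (v : PuncturedPlane) : ℚ := 101 * v.1.1 - 99 * v.1.2

def eigenB (v : PuncturedPlane) : ℚ := 99 * v.1.1 + 101 * v.1.2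

def pingPongX (b : Bool) : Set PuncturedPlane :=
  cond b (attractingCone eigenA fun v => v.1.2) (attractingCone eigenB fun v => v.1.1)

def pingPongY (b : Bool) : Set PuncturedPlane :=
  cond b (repellingCone eigenA fun v => v.1.2) (repellingCone eigenB fun v => v.1.1)

theorem eigenA_puncturedPermA (v : PuncturedPlane) :
    eigenA (puncturedPermA v) = -100 * eigenA v := by
  simp only [eigenA, puncturedPermA, Equiv.Perm.subtypePerm_apply, planePermA, Equiv.coe_fn_mk,
    planeMapA]
  ring

theorem eigenB_puncturedPermB (v : PuncturedPlane) :
    eigenB (puncturedPermB v) = -100 * eigenB v := by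
  simp only [eigenB, puncturedPermB, Equiv.Perm.subtypePerm_apply, planePermB, Equiv.coe_fn_mk,
    planeMapB]
  ring

theorem eigenA_ne_zero_or_snd_ne_zero (v : PuncturedPlane) : eigenA v ≠ 0 ∨ v.1.2 ≠ 0 := by
  obtain ⟨⟨x, y⟩, hv⟩ := v
  by_contra! h
  simp only [eigenA] at h
  obtain ⟨h₁, rfl⟩ := h
  exact hv (Prod.ext (by rw [Prod.fst_zero]; linarith) rfl)

theorem eigenB_ne_zero_or_fst_ne_zero (v : PuncturedPlane) : eigenB v ≠ 0 ∨ v.1.1 ≠ 0 := by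
  obtain ⟨⟨x, y⟩, hv⟩ := v
  by_contra! h
  simp only [eigenB] at h
  obtain ⟨h₁, rfl⟩ := h
  exact hv (Prod.ext rfl (by rw [Prod.snd_zero]; linarith))

theorem disjoint_pingPongX : Disjoint (pingPongX true) (pingPongX false) :=
  Set.disjoint_left.2 fun ⟨(x, y), _⟩ hA hB => by
    simp only [pingPongX, cond_true, cond_false, attractingCone, eigenA, eigenB,
      Set.mem_ofPred_eq] at hA hB
    cases abs_cases (101 * x - 99 * y) <;> cases abs_cases (99 * x + 101 * y) <;>
      cases abs_cases x <;> cases abs_cases y <;> linarith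

theorem disjoint_pingPongY : Disjoint (pingPongY true) (pingPongY false) :=
  Set.disjoint_left.2 fun ⟨(x, y), _⟩ hA hB => by
    simp only [pingPongY, cond_true, cond_false, repellingCone, eigenA, eigenB,
      Set.mem_ofPred_eq] at hA hB
    cases abs_cases (101 * x - 99 * y) <;> cases abs_cases (99 * x + 101 * y) <;>
      cases abs_cases x <;> cases abs_cases y <;> linarith

theorem disjoint_pingPongX_pingPongY (b b' : Bool) : Disjoint (pingPongX b) (pingPongY b') := by
  cases b <;> cases b'
  case false.false | true.true => exact disjoint_attractingCone_repellingCone _ _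
  all_goals
    refine Set.disjoint_left.2 fun ⟨(x, y), _⟩ hA hB => ?_
    simp only [pingPongX, pingPongY, cond_true, cond_false, attractingCone, repellingCone, eigenA,
      eigenB, Set.mem_ofPred_eq] at hA hB
    cases abs_cases (101 * x - 99 * y) <;> cases abs_cases (99 * x + 101 * y) <;>
      cases abs_cases x <;> cases abs_cases y <;> linarith

theorem injective_lift_puncturedPerm :
    Function.Injective
      (FreeGroup.lift fun b : Bool => if b then puncturedPermA else puncturedPermB) := by
  refine FreeGroup.injective_lift_of_ping_pong _ pingPongX pingPongY ?_
    (pairwise_disjoint_on_bool.2 disjoint_pingPongX)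
    (pairwise_disjoint_on_bool.2 disjoint_pingPongY) disjoint_pingPongX_pingPongY ?_ ?_
  · rintro (_ | _)
    · exact ⟨⟨(0, 1), by simp⟩, by norm_num [pingPongX, attractingCone, eigenB]⟩
    · exact ⟨⟨(1, 0), by simp⟩, by norm_num [pingPongX, attractingCone, eigenA]⟩
  · rintro (_ | _)
    · exact smul_compl_repellingCone_subset eigenB_puncturedPermB (fun _ => rfl)
        eigenB_ne_zero_or_fst_ne_zero
    · exact smul_compl_repellingCone_subset eigenA_puncturedPermA (fun _ => rfl)
        eigenA_ne_zero_or_snd_ne_zero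
  · rintro (_ | _)
    · exact inv_smul_compl_attractingCone_subset eigenB_puncturedPermB (fun _ => rfl)
        eigenB_ne_zero_or_fst_ne_zero
    · exact inv_smul_compl_attractingCone_subset eigenA_puncturedPermA (fun _ => rfl)
        eigenA_ne_zero_or_snd_ne_zero

end RationalPingPong

theorem bkl_crossing_free_general {n : ℕ} (i j k l : Fin n)
    (hij : i < j) (hjk : j < k) (hkl : k < l) :
    Function.Injective
      (FreeGroup.lift (fun t : Bool => if t then bkl n i k else bkl n j l) :
        FreeGroup Bool →* BraidGroup n) := by
  have ht : (100 : ℚ) ≠ 0 := by norm_num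
  have hij : (i : ℕ) < j := hij
  have hjk : (j : ℕ) < k := hjk
  have hkl : (k : ℕ) < l := hkl
  refine FreeGroup.injective_of_semiconj (burau ht n) (e := bklPlane 100 i j k l ∘ Subtype.val)
    ((bklPlane_injective hij hjk hkl ht).comp Subtype.val_injective) ?_
    injective_lift_puncturedPerm
  rintro (_ | _) v
  · simp only [FreeGroup.lift_apply_of, Bool.false_eq_true, if_false, Function.comp_apply,
      burau_bkl ht (hjk.trans hkl) l.isLt]
    exact (bklAction_bklPlane_right hij hjk hkl ht v.1).symm
  · simp only [FreeGroup.lift_apply_of, if_true, Function.comp_apply,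
      burau_bkl ht (hij.trans hjk) (hkl.trans l.isLt)]
    exact (bklAction_bklPlane_left hij hjk hkl ht v.1).symm

/-- **Lemma.** If `n ≥ 4` and `i < j < k < l` are strand indices, then the Birman–Ko–Lee
generators `a_{ik}` and `a_{jl}` generate a free subgroup of `B_n` of rank `2`: the
homomorphism from the free group on two generators sending them to `a_{ik}` and `a_{jl}`
is injective. -/
theorem bkl_crossing_free {n : ℕ} (hn : 4 ≤ n) (i j k l : Fin n)
    (hij : i < j) (hjk : j < k) (hkl : k < l) :
    Function.Injective
      (FreeGroup.lift (fun t : Bool => if t then bkl n i k else bkl n j l) :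
        FreeGroup Bool →* BraidGroup n) :=
  bkl_crossing_free_general i j k l hij hjk hkl
end

section
/- In the braid group B_3, the elements σ_1σ_2σ_1^{-1} and σ_2σ_1σ_2^{-1} generate a free subgroup of rank 2; equivalently, the group homomorphism from the free group on two generators to B_3 sending the generators to σ_1σ_2σ_1^{-1} and σ_2σ_1σ_2^{-1} is injective. -/
/-!
Under the representation `σ₁ ↦ [[1, 1], [0, 1]]`, `σ₂ ↦ [[1, 0], [-1, 1]]` of `B₃` in `SL(2, ℤ)`,
the two elements become unipotent matrices fixing `(1, 1)` and `(1, -1)`. In the coordinates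
`p = v₀ + v₁`, `q = v₁ - v₀` of `ℤ²` their `n`-th powers act by `(p, q) ↦ (p + 2nq, q)` and
`(p, q) ↦ (p, q - 2np)`, so for `n ≠ 0` they play ping-pong on the regions `|p| < |q|` and
`|q| < |p|` (Sanov). Hence the images generate a free group, and so do the braids themselves.
-/

open scoped Pointwise Function

theorem zpow_smul_eq_add_zsmul {G M : Type*} [Group G] [AddCommGroup M] [DistribMulAction G M]
    {g : G} {v w : M} (hv : g • v = v + w) (hw : g • w = w) (n : ℤ) :
    g ^ n • v = v + n • w := by
  have hv' : g⁻¹ • v = v - w := by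
    rw [inv_smul_eq_iff, smul_sub, hv, hw, add_sub_cancel_right]
  have hw' : g⁻¹ • w = w := by rw [inv_smul_eq_iff, hw]
  induction n using Int.induction_on with
  | zero => simp
  | succ n ih =>
    rw [add_comm, zpow_add, zpow_one, mul_smul, ih, smul_add, hv, smul_comm, hw]
    module
  | pred n ih =>
    rw [sub_eq_neg_add, zpow_add, zpow_neg_one, mul_smul, ih, smul_add, hv', smul_comm, hw']
    module

theorem FreeGroup.injective_lift_of_zpow_ping_pong {ι G α : Type*} [Nontrivial ι] [Group G]
    [MulAction G α] (a : ι → G) (X : ι → Set α) (hXnonempty : ∀ i, (X i).Nonempty)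
    (hXdisj : Pairwise (Disjoint on X))
    (hpp : Pairwise fun i j => ∀ n : ℤ, n ≠ 0 → a i ^ n • X j ⊆ X i) :
    Function.Injective (FreeGroup.lift a) := by
  have hlift : FreeGroup.lift a = (Monoid.CoprodI.lift fun i =>
      FreeGroup.lift fun _ : Unit => a i).comp freeGroupEquivCoprodI.toMonoidHom := by
    ext i
    simp
  rw [hlift, MonoidHom.coe_comp]
  refine Function.Injective.comp ?_ freeGroupEquivCoprodI.injective
  refine Monoid.CoprodI.lift_injective_of_ping_pong _ ?_ X hXnonempty hXdisj ?_
  · obtain ⟨i⟩ : Nonempty ι := inferInstance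
    exact Or.inr ⟨i, Cardinal.natCast_le_aleph0.trans (Cardinal.aleph0_le_mk _)⟩
  · intro i j hij h hh
    obtain ⟨n, rfl⟩ := FreeGroup.freeGroupUnitEquivInt.symm.surjective h
    have hn : n ≠ 0 := by rintro rfl; exact hh (zpow_zero _)
    simpa [FreeGroup.freeGroupUnitEquivInt] using hpp hij n hn

theorem Int.abs_lt_abs_add_two_mul {p q n : ℤ} (hn : n ≠ 0) (h : |p| < |q|) :
    |q| < |p + 2 * n * q| := by
  have hn1 := Int.one_le_abs hn
  calc |q| < 2 * |n| * |q| - |p| := by nlinarith [abs_nonneg q]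
    _ = |2 * n * q| - |p| := by simp [abs_mul]
    _ ≤ |p + 2 * n * q| := by
      have := abs_sub_abs_le_abs_sub (2 * n * q) (-p)
      rwa [abs_neg, sub_neg_eq_add, add_comm] at this

namespace BraidGroup

variable {G : Type*} [Group G] {a b : G}

theorem lift_eq_one_of_mem_braidRels_three (hab : a * b * a = b * a * b) :
    ∀ r ∈ braidRels 3, FreeGroup.lift ![a, b] r = 1 := by
  rintro r ⟨i, j, ⟨hij, rfl⟩ | ⟨hij, rfl⟩⟩ <;> fin_cases i <;> fin_cases j <;> simp_all

variable (a b) in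
def liftThree (hab : a * b * a = b * a * b) : BraidGroup 3 →* G :=
  PresentedGroup.toGroup (lift_eq_one_of_mem_braidRels_three hab)

@[simp]
theorem liftThree_braidGen'_zero (hab : a * b * a = b * a * b) :
    liftThree a b hab (braidGen' 3 0) = a :=
  PresentedGroup.toGroup.of _

@[simp]
theorem liftThree_braidGen'_one (hab : a * b * a = b * a * b) :
    liftThree a b hab (braidGen' 3 1) = b :=
  PresentedGroup.toGroup.of _

end BraidGroup

open Matrix MatrixGroups

def sl2Upper : SL(2, ℤ) := ⟨!![1, 1; 0, 1], by decide⟩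

def sl2Lower : SL(2, ℤ) := ⟨!![1, 0; -1, 1], by decide⟩

def braidConjOne : SL(2, ℤ) := ⟨!![0, 1; -1, 2], by decide⟩

def braidConjTwo : SL(2, ℤ) := ⟨!![2, 1; -1, 0], by decide⟩

theorem sl2Upper_mul_sl2Lower_mul_sl2Upper :
    sl2Upper * sl2Lower * sl2Upper = sl2Lower * sl2Upper * sl2Lower := by
  decide

theorem sl2Upper_mul_sl2Lower_mul_inv : sl2Upper * sl2Lower * sl2Upper⁻¹ = braidConjOne := by
  decide

theorem sl2Lower_mul_sl2Upper_mul_inv : sl2Lower * sl2Upper * sl2Lower⁻¹ = braidConjTwo := by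
  decide

theorem braidConjOne_smul (v : Fin 2 → ℤ) : braidConjOne • v = v + (v 1 - v 0) • ![1, 1] := by
  change !![0, 1; -1, 2] *ᵥ v = _
  ext i
  fin_cases i <;> simp [mulVec, dotProduct, Fin.sum_univ_two]
  ring

theorem braidConjTwo_smul (v : Fin 2 → ℤ) : braidConjTwo • v = v + (v 0 + v 1) • ![1, -1] := by
  change !![2, 1; -1, 0] *ᵥ v = _
  ext i
  fin_cases i <;> simp [mulVec, dotProduct, Fin.sum_univ_two]
  ring

theorem braidConjOne_zpow_smul (n : ℤ) (v : Fin 2 → ℤ) :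
    braidConjOne ^ n • v = v + n • (v 1 - v 0) • ![1, 1] :=
  zpow_smul_eq_add_zsmul (braidConjOne_smul v) (by rw [smul_comm, braidConjOne_smul]; simp) n

theorem braidConjTwo_zpow_smul (n : ℤ) (v : Fin 2 → ℤ) :
    braidConjTwo ^ n • v = v + n • (v 0 + v 1) • ![1, -1] :=
  zpow_smul_eq_add_zsmul (braidConjTwo_smul v) (by rw [smul_comm, braidConjTwo_smul]; simp) n

def pingPongSet : Bool → Set (Fin 2 → ℤ)
  | true => {v | |v 1 - v 0| < |v 0 + v 1|}
  | false => {v | |v 0 + v 1| < |v 1 - v 0|}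

theorem braidConjOne_zpow_smul_mem {n : ℤ} (hn : n ≠ 0) {v : Fin 2 → ℤ}
    (hv : v ∈ pingPongSet false) : braidConjOne ^ n • v ∈ pingPongSet true := by
  simp only [pingPongSet, Set.mem_ofPred_eq] at hv ⊢
  simp only [braidConjOne_zpow_smul, Pi.add_apply, Pi.smul_apply, smul_eq_mul, cons_val_zero,
    cons_val_one, cons_val_fin_one]
  convert Int.abs_lt_abs_add_two_mul hn hv using 2 <;> ring

theorem braidConjTwo_zpow_smul_mem {n : ℤ} (hn : n ≠ 0) {v : Fin 2 → ℤ}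
    (hv : v ∈ pingPongSet true) : braidConjTwo ^ n • v ∈ pingPongSet false := by
  simp only [pingPongSet, Set.mem_ofPred_eq] at hv ⊢
  simp only [braidConjTwo_zpow_smul, Pi.add_apply, Pi.smul_apply, smul_eq_mul, cons_val_zero,
    cons_val_one, cons_val_fin_one]
  convert Int.abs_lt_abs_add_two_mul (neg_ne_zero.2 hn) hv using 2 <;> ring

theorem injective_lift_braidConj : Function.Injective
    (FreeGroup.lift fun t : Bool => if t then braidConjOne else braidConjTwo) := by
  refine FreeGroup.injective_lift_of_zpow_ping_pong _ pingPongSet ?_ ?_ ?_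
  · rintro (_ | _)
    · exact ⟨![1, -1], by simp [pingPongSet]⟩
    · exact ⟨![1, 1], by simp [pingPongSet]⟩
  · rintro (_ | _) (_ | _) hij <;> simp only [ne_eq, not_true_eq_false] at hij <;>
      refine Set.disjoint_left.2 fun v h₁ h₂ => ?_ <;>
      simp only [pingPongSet, Set.mem_ofPred_eq] at h₁ h₂ <;> exact lt_asymm h₁ h₂
  · rintro (_ | _) (_ | _) hij n hn <;> simp only [ne_eq, not_true_eq_false] at hij
    · exact Set.smul_set_subset_iff.2 fun _ hv => braidConjTwo_zpow_smul_mem hn hv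
    · exact Set.smul_set_subset_iff.2 fun _ hv => braidConjOne_zpow_smul_mem hn hv

/-- **Lemma.** In the braid group `B_3` the elements `σ_1 σ_2 σ_1⁻¹` and `σ_2 σ_1 σ_2⁻¹`
(written `0`-based as `σ_0 σ_1 σ_0⁻¹` and `σ_1 σ_0 σ_1⁻¹`) generate a free subgroup of
rank `2`: the homomorphism from the free group on two generators sending them to these
elements is injective. -/
theorem conj_gens_free_B3 :
    Function.Injective
      (FreeGroup.lift (fun t : Bool =>
          if t then braidGen' 3 0 * braidGen' 3 1 * (braidGen' 3 0)⁻¹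
          else braidGen' 3 1 * braidGen' 3 0 * (braidGen' 3 1)⁻¹) :
        FreeGroup Bool →* BraidGroup 3) := by
  refine Function.Injective.of_comp
    (f := BraidGroup.liftThree sl2Upper sl2Lower sl2Upper_mul_sl2Lower_mul_sl2Upper) ?_
  convert injective_lift_braidConj using 1
  rw [← MonoidHom.coe_comp]
  congr 1
  ext (_ | _)
  · simp [sl2Lower_mul_sl2Upper_mul_inv]
  · simp [sl2Upper_mul_sl2Lower_mul_inv]
end

section
/- Let Γ = (ℤ/3ℤ) ∗ (ℤ/2ℤ) be the free product, with u the image in Γ of a generator of ℤ/3ℤ and v the image in Γ of the generator of ℤ/2ℤ. Then the elements u^{-1}vu^{-1} and vu^{-1}vu^{-1}v generate a free subgroup of Γ of rank 2; equivalently, the homomorphism from the free group on two generators to Γ sending the generators to u^{-1}vu^{-1} and vu^{-1}vu^{-1}v is injective. -/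
/-!
`Γ` acts on the irrational numbers by the Möbius maps `u t = 1 / (1 - t)` and
`v t = -1 / t` (irrationals avoid every pole, and `u³ = v² = 1`). Under this action
`u⁻¹ v u⁻¹` acts as `A t = 2 - 1 / t` and `v u⁻¹ v u⁻¹ v` as `A⁻¹ C` with `C t = t + 4`.
The parabolic maps `A` and `C` play ping-pong on the sets `|t - 2| < 1`, `|t| < 1` and
`t > 3`, `t < -1`, so they generate a free group, and the Nielsen move
`(A, C) ↦ (A, A⁻¹ C)` preserves freeness.
-/

def zmodPowersHom {G : Type*} [Group G] (n : ℕ) (g : G) (hg : g ^ n = 1) :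
    Multiplicative (ZMod n) →* G :=
  AddMonoidHom.toMultiplicativeLeft <|
    ZMod.lift n ⟨zmultiplesHom (Additive G) (Additive.ofMul g), by
      simpa [← ofMul_zpow] using congrArg Additive.ofMul hg⟩

@[simp]
lemma zmodPowersHom_ofAdd_one {G : Type*} [Group G] (n : ℕ) (g : G) (hg : g ^ n = 1) :
    zmodPowersHom n g hg (Multiplicative.ofAdd 1) = g := by
  have h1 : (1 : ZMod n) = ((1 : ℤ) : ZMod n) := Int.cast_one.symm
  simp only [zmodPowersHom, AddMonoidHom.toMultiplicativeLeft_apply_apply, toAdd_ofAdd, h1,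
    ZMod.lift_coe]
  simp

theorem FreeGroup.injective_lift_inv_mul_of_injective_lift {G : Type*} [Group G] {a b : G}
    (h : Function.Injective (FreeGroup.lift fun t : Bool => if t then a else b)) :
    Function.Injective (FreeGroup.lift fun t : Bool => if t then a else a⁻¹ * b) := by
  let ν : FreeGroup Bool →* FreeGroup Bool :=
    FreeGroup.lift fun t => if t then of true else (of true)⁻¹ * of false
  let μ : FreeGroup Bool →* FreeGroup Bool :=
    FreeGroup.lift fun t => if t then of true else of true * of false
  have hμν : μ.comp ν = MonoidHom.id _ :=
    FreeGroup.ext_hom _ _ fun t => by cases t <;> simp [μ, ν]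
  have hlift : (FreeGroup.lift fun t : Bool => if t then a else a⁻¹ * b) =
      (FreeGroup.lift fun t : Bool => if t then a else b).comp ν :=
    FreeGroup.ext_hom _ _ fun t => by cases t <;> simp [ν]
  rw [hlift, MonoidHom.coe_comp]
  exact h.comp (Function.LeftInverse.injective (g := μ) (DFunLike.congr_fun hμν))

noncomputable section

abbrev Irrationals : Type := {x : ℝ // Irrational x}

namespace Irrationals

lemma one_sub_ne_zero (x : Irrationals) : 1 - (x : ℝ) ≠ 0 := sub_ne_zero.2 x.2.ne_one.symm

def permU : Equiv.Perm Irrationals where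
  toFun x := ⟨(1 - x)⁻¹, by simpa using (x.2.intCast_sub 1).inv⟩
  invFun x := ⟨1 - (x : ℝ)⁻¹, by simpa using x.2.inv.intCast_sub 1⟩
  left_inv x := by
    have := one_sub_ne_zero x
    ext; simp only; field_simp; ring
  right_inv x := by
    have := x.2.ne_zero
    ext; simp only; field_simp; ring

def permV : Equiv.Perm Irrationals where
  toFun x := ⟨-(x : ℝ)⁻¹, x.2.inv.neg⟩
  invFun x := ⟨-(x : ℝ)⁻¹, x.2.inv.neg⟩
  left_inv x := by ext; simp
  right_inv x := by ext; simp

def permA : Equiv.Perm Irrationals where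
  toFun x := ⟨2 - (x : ℝ)⁻¹, by simpa using x.2.inv.intCast_sub 2⟩
  invFun x := ⟨(2 - x)⁻¹, by simpa using (x.2.intCast_sub 2).inv⟩
  left_inv x := by ext; simp
  right_inv x := by ext; simp

def permC : Equiv.Perm Irrationals where
  toFun x := ⟨x + 4, by simpa using x.2.add_intCast 4⟩
  invFun x := ⟨x - 4, by simpa using x.2.sub_intCast 4⟩
  left_inv x := by ext; simp
  right_inv x := by ext; simp

@[simp] lemma coe_permU (x : Irrationals) : (permU x : ℝ) = (1 - (x : ℝ))⁻¹ := rfl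
@[simp] lemma coe_permU_symm (x : Irrationals) : (permU.symm x : ℝ) = 1 - (x : ℝ)⁻¹ := rfl
@[simp] lemma coe_permV (x : Irrationals) : (permV x : ℝ) = -(x : ℝ)⁻¹ := rfl
@[simp] lemma coe_permA (x : Irrationals) : (permA x : ℝ) = 2 - (x : ℝ)⁻¹ := rfl
@[simp] lemma coe_permA_symm (x : Irrationals) : (permA.symm x : ℝ) = (2 - (x : ℝ))⁻¹ := rfl
@[simp] lemma coe_permC (x : Irrationals) : (permC x : ℝ) = x + 4 := rfl
@[simp] lemma coe_permC_symm (x : Irrationals) : (permC.symm x : ℝ) = x - 4 := rfl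

lemma permU_pow_three : permU ^ 3 = 1 := by
  ext x
  have h0 := x.2.ne_zero
  have h1 := one_sub_ne_zero x
  have h : 1 - (1 - (x : ℝ))⁻¹ = -x / (1 - x) := by field_simp; ring
  simp only [pow_succ, pow_zero, one_mul, Equiv.Perm.mul_apply, coe_permU, Equiv.Perm.one_apply]
  rw [h, inv_div]
  field_simp
  ring

lemma permV_sq : permV ^ 2 = 1 := by
  ext x
  simp [sq]

lemma permU_inv_mul_permV_mul_permU_inv : permU⁻¹ * permV * permU⁻¹ = permA := by
  ext x
  simp only [Equiv.Perm.mul_apply, Equiv.Perm.inv_def, coe_permU_symm, coe_permV, coe_permA]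
  rw [inv_neg, inv_inv]; ring

lemma permV_mul_permU_inv_mul_permV_mul_permU_inv_mul_permV :
    permV * permU⁻¹ * permV * permU⁻¹ * permV = permA⁻¹ * permC := by
  ext x
  simp only [Equiv.Perm.mul_apply, Equiv.Perm.inv_def, coe_permU_symm, coe_permV, coe_permA_symm,
    coe_permC, inv_neg, inv_inv]
  rw [← inv_neg]; congr 1; ring

open Pointwise

def pingPongX (t : Bool) : Set Irrationals :=
  bif t then {x | |(x : ℝ) - 2| < 1} else {x | 3 < (x : ℝ)}

def pingPongY (t : Bool) : Set Irrationals :=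
  bif t then {x | |(x : ℝ)| < 1} else {x | (x : ℝ) < -1}

lemma one_lt_abs_sub_intCast {x : Irrationals} (k : ℤ) (hx : ¬ |(x : ℝ) - k| < 1) :
    1 < |(x : ℝ) - k| :=
  lt_of_le_of_ne (not_lt.1 hx) fun h => by
    rcases (abs_eq zero_le_one).1 h.symm with h | h
    · exact x.2.ne_int (k + 1) (by push_cast; linarith)
    · exact x.2.ne_int (k - 1) (by push_cast; linarith)

lemma permA_smul_compl_pingPongY : permA • (pingPongY true)ᶜ ⊆ pingPongX true := by
  refine Set.smul_set_subset_iff.2 fun x hx => ?_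
  have h := one_lt_abs_sub_intCast 0 (by simpa [pingPongY] using hx)
  simp only [Int.cast_zero, sub_zero] at h
  simpa [pingPongX, Equiv.Perm.smul_def, abs_inv] using inv_lt_one_of_one_lt₀ h

lemma permA_inv_smul_compl_pingPongX : permA⁻¹ • (pingPongX true)ᶜ ⊆ pingPongY true := by
  refine Set.smul_set_subset_iff.2 fun x hx => ?_
  have h := one_lt_abs_sub_intCast 2 (by simpa [pingPongX] using hx)
  simpa [pingPongY, Equiv.Perm.smul_def, Equiv.Perm.inv_def, abs_inv, abs_sub_comm] using
    inv_lt_one_of_one_lt₀ h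

lemma permC_smul_compl_pingPongY : permC • (pingPongY false)ᶜ ⊆ pingPongX false := by
  refine Set.smul_set_subset_iff.2 fun x hx => ?_
  have h : (x : ℝ) ≠ -1 := by simpa using x.2.ne_int (-1)
  simp only [pingPongY, pingPongX, cond_false, Set.mem_compl_iff,
    Set.mem_ofPred_eq, not_lt, Equiv.Perm.smul_def, coe_permC] at hx ⊢
  linarith [lt_of_le_of_ne hx h.symm]

lemma permC_inv_smul_compl_pingPongX : permC⁻¹ • (pingPongX false)ᶜ ⊆ pingPongY false := by
  refine Set.smul_set_subset_iff.2 fun x hx => ?_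
  have h : (x : ℝ) ≠ 3 := by simpa using x.2.ne_int 3
  simp only [pingPongY, pingPongX, cond_false, Set.mem_compl_iff,
    Set.mem_ofPred_eq, not_lt, Equiv.Perm.smul_def, Equiv.Perm.inv_def, coe_permC_symm] at hx ⊢
  linarith [lt_of_le_of_ne hx h]

lemma pingPongX_nonempty (t : Bool) : (pingPongX t).Nonempty := by
  obtain ⟨r, hr, h1, h2⟩ := exists_irrational_btwn (show (3 : ℝ) < 4 by norm_num)
  obtain ⟨s, hs, h3, h4⟩ := exists_irrational_btwn (show (2 : ℝ) < 3 by norm_num)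
  cases t
  · exact ⟨⟨r, hr⟩, h1⟩
  · refine ⟨⟨s, hs⟩, ?_⟩
    simp only [pingPongX, cond_true, Set.mem_ofPred_eq, abs_lt]
    constructor <;> linarith

theorem injective_lift_permA_permC :
    Function.Injective (FreeGroup.lift fun t : Bool => if t then permA else permC) := by
  refine FreeGroup.injective_lift_of_ping_pong _ pingPongX pingPongY pingPongX_nonempty
    ?_ ?_ ?_ ?_ ?_
  · refine pairwise_disjoint_on_bool.2 (Set.disjoint_left.2 fun x h₁ h₂ => ?_)
    simp only [Set.mem_ofPred_eq, abs_lt] at h₁ h₂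
    linarith
  · refine pairwise_disjoint_on_bool.2 (Set.disjoint_left.2 fun x h₁ h₂ => ?_)
    simp only [Set.mem_ofPred_eq, abs_lt] at h₁ h₂
    linarith
  · intro i j
    refine Set.disjoint_left.2 fun x h₁ h₂ => ?_
    cases i <;> cases j <;>
      simp only [pingPongX, pingPongY, cond_true, cond_false, Set.mem_ofPred_eq,
        abs_lt] at h₁ h₂ <;> linarith
  · intro t; cases t
    · exact permC_smul_compl_pingPongY
    · exact permA_smul_compl_pingPongY
  · intro t; cases t
    · exact permC_inv_smul_compl_pingPongX
    · exact permA_inv_smul_compl_pingPongX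

end Irrationals

end

/-- **Lemma.** Let `Γ = (ℤ/3ℤ) ∗ (ℤ/2ℤ)` be the free product, `u` the image in `Γ` of the
generator `1` of `ℤ/3ℤ` and `v` the image of the generator of `ℤ/2ℤ`. Then `u⁻¹ v u⁻¹`
and `v u⁻¹ v u⁻¹ v` generate a free subgroup of `Γ` of rank `2`: the homomorphism from
the free group on two generators sending them to these elements is injective. -/
theorem free_subgroup_of_coprod :
    Function.Injective
      (FreeGroup.lift (fun t : Bool =>
          let u : Monoid.Coprod (Multiplicative (ZMod 3)) (Multiplicative (ZMod 2)) :=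
            Monoid.Coprod.inl (Multiplicative.ofAdd (1 : ZMod 3))
          let v : Monoid.Coprod (Multiplicative (ZMod 3)) (Multiplicative (ZMod 2)) :=
            Monoid.Coprod.inr (Multiplicative.ofAdd (1 : ZMod 2))
          if t then u⁻¹ * v * u⁻¹ else v * u⁻¹ * v * u⁻¹ * v) :
        FreeGroup Bool →* Monoid.Coprod (Multiplicative (ZMod 3)) (Multiplicative (ZMod 2))) := by
  let ρ := Monoid.Coprod.lift (zmodPowersHom 3 Irrationals.permU Irrationals.permU_pow_three)
    (zmodPowersHom 2 Irrationals.permV Irrationals.permV_sq)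
  refine Function.Injective.of_comp (f := ρ) ?_
  rw [← MonoidHom.coe_comp]
  convert FreeGroup.injective_lift_inv_mul_of_injective_lift
    Irrationals.injective_lift_permA_permC using 2
  ext t
  cases t
  · simp [ρ, ← Irrationals.permV_mul_permU_inv_mul_permV_mul_permU_inv_mul_permV]
  · simp [ρ, ← Irrationals.permU_inv_mul_permV_mul_permU_inv]
end

section
/- Let 1 ≤ i < k ≤ n and 1 ≤ j < l ≤ n. If the intervals [i,k] and [j,l] are disjoint (k < j or l < i) or strictly nested (i < j < l < k or j < i < k < l), then the Birman–Ko–Lee generators commute in B_n: a_{ik} a_{jl} = a_{jl} a_{ik}. -/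
namespace BKLaux

variable {n : ℕ}

lemma rel_eq_one {r : FreeGroup (Fin (n-1))} (hr : r ∈ braidRels n) :
    (PresentedGroup.mk (braidRels n) r : BraidGroup n) = 1 := by
  exact (QuotientGroup.eq_one_iff r).mpr (Subgroup.subset_normalClosure hr)

lemma braid_rel (a : ℕ) (h : a + 1 < n - 1) :
    braidGen' n a * braidGen' n (a+1) * braidGen' n a
      = braidGen' n (a+1) * braidGen' n a * braidGen' n (a+1) := by
  have ha : a < n - 1 := by omega
  have hr : (FreeGroup.of (⟨a, ha⟩ : Fin (n-1)) * FreeGroup.of ⟨a+1, h⟩ * FreeGroup.of ⟨a, ha⟩ *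
      (FreeGroup.of ⟨a+1, h⟩ * FreeGroup.of ⟨a, ha⟩ * FreeGroup.of ⟨a+1, h⟩)⁻¹) ∈ braidRels n :=
    ⟨⟨a, ha⟩, ⟨a+1, h⟩, Or.inl ⟨rfl, rfl⟩⟩
  have := rel_eq_one hr
  rw [map_mul, map_mul, map_inv, map_mul, map_mul, mul_inv_eq_one] at this
  simpa [braidGen', braidGen, ha, h, PresentedGroup.of] using this

lemma comm_far {a b : ℕ} (h : a + 2 ≤ b) :
    Commute (braidGen' n a) (braidGen' n b) := by
  by_cases hb : b < n - 1
  · have ha : a < n - 1 := by omega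
    have hr : (FreeGroup.of (⟨a, ha⟩ : Fin (n-1)) * FreeGroup.of ⟨b, hb⟩ *
        (FreeGroup.of ⟨b, hb⟩ * FreeGroup.of ⟨a, ha⟩)⁻¹) ∈ braidRels n :=
      ⟨⟨a, ha⟩, ⟨b, hb⟩, Or.inr ⟨h, rfl⟩⟩
    have := rel_eq_one hr
    rw [map_mul, map_inv, map_mul, mul_inv_eq_one] at this
    have h' : braidGen' n a * braidGen' n b = braidGen' n b * braidGen' n a := by
      simpa [braidGen', braidGen, ha, hb, PresentedGroup.of] using this
    exact h'
  · simp [braidGen', hb, Commute.one_right]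

/-- staircase product σ_i σ_{i+1} ⋯ σ_{i+m-1} -/
def W (n i m : ℕ) : BraidGroup n :=
  ((List.range m).map fun t => braidGen' n (i + t)).prod

lemma bkl_eq (i j : ℕ) : bkl n i j = W n i (j-1-i) * braidGen' n (j-1) * (W n i (j-1-i))⁻¹ := rfl

lemma W_succ (i m : ℕ) : W n i (m+1) = W n i m * braidGen' n (i+m) := by
  simp [W, List.range_succ]

lemma comm_W_right {b i m : ℕ} (h : ∀ s, s < m → Commute (braidGen' n b) (braidGen' n (i+s))) :
    Commute (braidGen' n b) (W n i m) := by
  apply Commute.list_prod_right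
  intro x hx
  simp only [List.mem_map, List.mem_range] at hx
  obtain ⟨s, hs, rfl⟩ := hx
  exact h s hs

lemma slide (m : ℕ) : ∀ i t : ℕ, i + m ≤ n - 1 → i < t → t < i + m →
    braidGen' n t * W n i m = W n i m * braidGen' n (t-1) := by
  induction m with
  | zero => intro i t _ h1 h2; omega
  | succ m ih =>
    intro i t hn h1 h2
    by_cases h2' : t < i + m
    · have hc : Commute (braidGen' n (t-1)) (braidGen' n (i+m)) := comm_far (by omega)
      rw [W_succ, ← mul_assoc, ih i t (by omega) h1 h2', mul_assoc, hc.eq, ← mul_assoc]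
    · have hm : 1 ≤ m := by omega
      obtain ⟨m', rfl⟩ : ∃ m', m = m' + 1 := ⟨m - 1, by omega⟩
      have h2'' : t = i + m' + 1 := by omega
      have hW2 : W n i (m'+1+1) = W n i m' * braidGen' n (t-1) * braidGen' n t := by
        rw [W_succ, W_succ, show i + m' = t - 1 from by omega,
          show i + (m' + 1) = t from by omega]
      have hcomm : Commute (braidGen' n t) (W n i m') := by
        apply comm_W_right; intro s hs; exact (comm_far (by omega)).symm
      have hb : braidGen' n (t-1) * braidGen' n t * braidGen' n (t-1)
          = braidGen' n t * braidGen' n (t-1) * braidGen' n t := by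
        have hrel := braid_rel (n := n) (t-1) (by omega)
        have ht : t - 1 + 1 = t := by omega
        rw [ht] at hrel; exact hrel
      calc braidGen' n t * W n i (m'+1+1)
          = W n i m' * (braidGen' n t * braidGen' n (t-1) * braidGen' n t) := by
            rw [hW2, ← mul_assoc, ← mul_assoc, hcomm.eq, mul_assoc, mul_assoc, mul_assoc]
        _ = W n i m' * (braidGen' n (t-1) * braidGen' n t * braidGen' n (t-1)) := by rw [← hb]
        _ = W n i (m'+1+1) * braidGen' n (t-1) := by
            rw [hW2]; group

lemma slide_inv {i m t : ℕ} (hn : i + m ≤ n - 1) (h1 : i < t) (h2 : t < i + m) :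
    braidGen' n (t-1) * (W n i m)⁻¹ = (W n i m)⁻¹ * braidGen' n t := by
  have := slide m i t hn h1 h2
  calc braidGen' n (t-1) * (W n i m)⁻¹
      = (W n i m)⁻¹ * (W n i m * braidGen' n (t-1)) * (W n i m)⁻¹ := by group
    _ = (W n i m)⁻¹ * (braidGen' n t * W n i m) * (W n i m)⁻¹ := by rw [← this]
    _ = (W n i m)⁻¹ * braidGen' n t := by group

/-- inside-strictly-nested commute -/
lemma K {i k t : ℕ} (hkn : k < n) (h1 : i < t) (h2 : t + 1 < k) :
    Commute (bkl n i k) (braidGen' n t) := by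
  symm
  unfold Commute SemiconjBy
  have hik : i < k := by omega
  have hm : i + (k - 1 - i) = k - 1 := by omega
  have hn1 : i + (k-1-i) ≤ n - 1 := by omega
  have h1' : i < t := h1
  have h2' : t < i + (k-1-i) := by omega
  rw [bkl_eq]
  have hs := slide (n := n) (k-1-i) i t hn1 h1' h2'
  have hsi := slide_inv (n := n) (i := i) (m := k-1-i) (t := t) hn1 h1' h2'
  have hc : Commute (braidGen' n (t-1)) (braidGen' n (k-1)) := comm_far (by omega)
  calc braidGen' n t * (W n i (k-1-i) * braidGen' n (k-1) * (W n i (k-1-i))⁻¹)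
      = (braidGen' n t * W n i (k-1-i)) * braidGen' n (k-1) * (W n i (k-1-i))⁻¹ := by group
    _ = W n i (k-1-i) * (braidGen' n (t-1) * braidGen' n (k-1)) * (W n i (k-1-i))⁻¹ := by
        rw [hs]; group
    _ = W n i (k-1-i) * braidGen' n (k-1) * (braidGen' n (t-1) * (W n i (k-1-i))⁻¹) := by
        rw [hc.eq]; group
    _ = W n i (k-1-i) * braidGen' n (k-1) * (W n i (k-1-i))⁻¹ * braidGen' n t := by
        rw [hsi]; group

/-- all letters of bkl far from t: commute -/
lemma Kfar {i k t : ℕ} (hik : i < k) (h : ∀ s, i ≤ s → s ≤ k - 1 → Commute (braidGen' n t) (braidGen' n s)) :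
    Commute (bkl n i k) (braidGen' n t) := by
  symm
  rw [bkl_eq]
  have hW : Commute (braidGen' n t) (W n i (k-1-i)) := by
    apply comm_W_right; intro s hs; exact h (i+s) (by omega) (by omega)
  exact (hW.mul_right (h (k-1) (by omega) le_rfl)).mul_right hW.inv_right

lemma Klo {i k t : ℕ} (hik : i < k) (h : t + 2 ≤ i) : Commute (bkl n i k) (braidGen' n t) :=
  Kfar hik fun s hs _ => comm_far (by omega)

lemma Khi {i k t : ℕ} (hik : i < k) (h : k + 1 ≤ t) : Commute (bkl n i k) (braidGen' n t) :=
  Kfar hik fun s _ hs => (comm_far (a := s) (b := t) (by omega)).symm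

lemma Kbkl {i k j l : ℕ} (hjl : j < l)
    (H : ∀ t, j ≤ t → t ≤ l - 1 → Commute (bkl n i k) (braidGen' n t)) :
    Commute (bkl n i k) (bkl n j l) := by
  rw [bkl_eq (n := n) j l]
  have hW : Commute (bkl n i k) (W n j (l-1-j)) := by
    apply Commute.list_prod_right
    intro x hx
    simp only [List.mem_map, List.mem_range] at hx
    obtain ⟨s, hs, rfl⟩ := hx
    exact H (j+s) (by omega) (by omega)
  exact (hW.mul_right (H (l-1) (by omega) le_rfl)).mul_right hW.inv_right

end BKLaux

/-- **Lemma.** Let `i < k` and `j < l` be strand indices in `Fin n`. If the intervals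
`[i,k]` and `[j,l]` are disjoint (`k < j` or `l < i`) or strictly nested
(`i < j` and `l < k`, or `j < i` and `k < l`), then the Birman–Ko–Lee generators
commute: `a_{ik} a_{jl} = a_{jl} a_{ik}` in `B_n`. -/
theorem bkl_commute {n : ℕ} (i k j l : Fin n) (hik : i < k) (hjl : j < l)
    (h : (k < j ∨ l < i) ∨ (i < j ∧ l < k) ∨ (j < i ∧ k < l)) :
    bkl n i k * bkl n j l = bkl n j l * bkl n i k := by
  have hik' : (i:ℕ) < k := hik
  have hjl' : (j:ℕ) < l := hjl
  have hkn : (k:ℕ) < n := k.isLt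
  have hln : (l:ℕ) < n := l.isLt
  rcases h with (hkj | hli) | (⟨hij, hlk⟩ | ⟨hji, hkl⟩)
  · have h' : (k:ℕ) < j := hkj
    exact (BKLaux.Kbkl hjl' fun t h1 h2 => BKLaux.Khi hik' (by omega)).eq
  · have h' : (l:ℕ) < i := hli
    exact (BKLaux.Kbkl hik' fun t h1 h2 => BKLaux.Khi hjl' (by omega)).symm.eq
  · have h1' : (i:ℕ) < j := hij
    have h2' : (l:ℕ) < k := hlk
    exact (BKLaux.Kbkl hjl' fun t h1 h2 => BKLaux.K hkn (by omega) (by omega)).eq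
  · have h1' : (j:ℕ) < i := hji
    have h2' : (k:ℕ) < l := hkl
    exact (BKLaux.Kbkl hik' fun t h1 h2 => BKLaux.K hln (by omega) (by omega)).symm.eq
end

section
/- Let F_m be the free group on x_1,…,x_m and let l(w) denote the length of the reduced word representing w ∈ F_m. Let u, v ∈ {x_1,…,x_m} and C, D ∈ F_m be such that l(C u C^{-1}) = 2 l(C) + 1 and l(D v D^{-1}) = 2 l(D) + 1, and set f = (C u C^{-1}, D v D^{-1}) ∈ F_m^2; write l(f) = l(f_1) + l(f_2). Consider the Hurwitz action of σ = σ_1 ∈ B_2: σ(f_1,f_2) = (f_2, f_2^{-1} f_1 f_2) and σ^{-1}(f_1,f_2) = (f_1 f_2 f_1^{-1}, f_1). Then l(σ^{-1} f) ≥ l(f) and l(σ f) ≥ l(f) hold if and only if there exist Z, A, B ∈ F_m such that C = Z A with l(C) = l(Z) + l(A), D = Z B with l(D) = l(Z) + l(B), and l(C u C^{-1} D v D^{-1}) = 2 l(Z) + 2 l(A) + 2 l(B) + 2. -/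
/-!
Write `c = z a`, `d = z b` for the reduced words of `C`, `D`, where `a` and `b` start with
different letters. The hypotheses on `C u C⁻¹` and `D v D⁻¹` say that `c` does not end in `u^{±1}`
and `d` does not end in `v^{±1}`.

Then `f₁ f₂` is represented by `z a u a⁻¹ b v b⁻¹ z⁻¹`, which is reduced iff `a u⁻¹` and `b v`
start with different letters. Next, `σ⁻¹` acts through `f₁ f₂ f₁⁻¹ = g v g⁻¹` with
`g = z a u a⁻¹ b`. If `a u⁻¹` and `b` start differently, this word for `g` is reduced and
conjugating `v` by it cancels at most `u a⁻¹`, so `l(σ⁻¹ f) ≥ l(f)`. Otherwise `a` is empty and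
`b = u⁻¹ b'`, so `g = z b'` and `l(g v g⁻¹) < l(f₂)`. Symmetrically, `l(σ f) ≥ l(f)` iff `b v` and
`a` start differently. Since `u⁻¹ ≠ v`, both sides of the equivalence reduce to the condition on
`a u⁻¹` and `b v`. A decomposition witnessing the right-hand side is itself such a split, so `z`
need not be the longest common prefix.
-/

def redLen {m : ℕ} (w : FreeGroup (Fin m)) : ℕ := w.toWord.length

namespace FreeGroup

open List

variable {α : Type*}

def NotEndsIn (s : α) (L : List (α × Bool)) : Prop := ∀ x ∈ L.getLast?, x.1 ≠ s

def HeadsDiffer (L₁ L₂ : List (α × Bool)) : Prop := ∀ p ∈ L₁.head?, ∀ q ∈ L₂.head?, p ≠ q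

theorem notEndsIn_append_iff {s : α} (L₁ : List (α × Bool)) {L₂ : List (α × Bool)}
    (h : L₂ ≠ []) : NotEndsIn s (L₁ ++ L₂) ↔ NotEndsIn s L₂ := by
  rw [NotEndsIn, NotEndsIn, getLast?_append_of_ne_nil _ h]

theorem NotEndsIn.append {s : α} {L₁ L₂ : List (α × Bool)} (h₁ : NotEndsIn s L₁)
    (h₂ : NotEndsIn s L₂) : NotEndsIn s (L₁ ++ L₂) := by
  rcases eq_or_ne L₂ [] with rfl | hne
  · simpa using h₁
  · exact (notEndsIn_append_iff L₁ hne).2 h₂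

theorem exists_eq_append_notEndsIn (s : α) (L : List (α × Bool)) :
    ∃ P Q, L = P ++ Q ∧ (∀ y ∈ Q, y.1 = s) ∧ NotEndsIn s P := by
  induction L using List.reverseRecOn with
  | nil => exact ⟨[], [], rfl, by simp, by simp [NotEndsIn]⟩
  | append_singleton L x ih =>
    by_cases hx : x.1 = s
    · obtain ⟨P, Q, rfl, hQ, hP⟩ := ih
      refine ⟨P, Q ++ [x], by simp, ?_, hP⟩
      simpa [or_imp, forall_and, hx] using hQ
    · exact ⟨L ++ [x], [], by simp, by simp, by simpa [NotEndsIn] using hx⟩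

theorem head?_append_cons (a : List (α × Bool)) (x : α × Bool) (l : List (α × Bool)) :
    (a ++ x :: l).head? = (a ++ [x]).head? := by
  cases a <;> rfl

theorem HeadsDiffer.symm {L₁ L₂ : List (α × Bool)} (h : HeadsDiffer L₁ L₂) : HeadsDiffer L₂ L₁ :=
  fun p hp q hq => (h q hq p hp).symm

theorem exists_eq_append_headsDiffer :
    ∀ L₁ L₂ : List (α × Bool), ∃ z a b, L₁ = z ++ a ∧ L₂ = z ++ b ∧ HeadsDiffer a b
  | p :: L₁, q :: L₂ => by
    by_cases hpq : p = q
    · obtain ⟨z, a, b, rfl, rfl, h⟩ := exists_eq_append_headsDiffer L₁ L₂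
      exact ⟨p :: z, a, b, rfl, by rw [hpq]; rfl, h⟩
    · exact ⟨[], p :: L₁, q :: L₂, rfl, rfl, by simpa [HeadsDiffer] using hpq⟩
  | [], L₂ => ⟨[], [], L₂, rfl, rfl, by simp [HeadsDiffer]⟩
  | L₁, [] => ⟨[], L₁, [], rfl, rfl, by simp [HeadsDiffer]⟩

theorem headsDiffer_append_singleton_iff {a b : List (α × Bool)} {x y : α × Bool} (hxy : x ≠ y) :
    HeadsDiffer (a ++ [x]) (b ++ [y]) ↔
      HeadsDiffer a b ∧ HeadsDiffer (a ++ [x]) b ∧ HeadsDiffer (b ++ [y]) a := by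
  cases a <;> cases b <;> simp [HeadsDiffer, hxy, ne_comm]

theorem head?_invRev (L : List (α × Bool)) :
    (invRev L).head? = L.getLast?.map fun x => (x.1, !x.2) := by
  rw [invRev, head?_reverse, getLast?_map]

theorem getLast?_invRev (L : List (α × Bool)) :
    (invRev L).getLast? = L.head?.map fun x => (x.1, !x.2) := by
  rw [invRev, getLast?_reverse, head?_map]

theorem invRev_append_cons_invRev (z a : List (α × Bool)) (x : α × Bool) :
    invRev (a ++ (x.1, !x.2) :: invRev (z ++ a)) = z ++ a ++ x :: invRev a := by
  rw [invRev_append, invRev_cons, invRev_invRev]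
  simp [FreeGroup.invRev]

theorem IsReduced.invRev {L : List (α × Bool)} (h : IsReduced L) : IsReduced (invRev L) := by
  simpa [IsReduced, FreeGroup.invRev, isChain_reverse, isChain_map, flip, eq_comm] using h

theorem isReduced_invRev_append_iff {p q : List (α × Bool)} (hp : IsReduced p)
    (hq : IsReduced q) : IsReduced (invRev p ++ q) ↔ HeadsDiffer p q := by
  have hp' := hp.invRev
  rw [IsReduced, isChain_append, getLast?_invRev]
  simp only [IsReduced] at hp' hq
  simp only [hp', hq, true_and, Option.mem_map, HeadsDiffer]
  constructor
  · rintro h x hx y hy rfl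
    simpa using h _ ⟨_, hx, rfl⟩ _ hy
  · rintro h _ ⟨⟨s, b⟩, hx, rfl⟩ ⟨t, c⟩ hy rfl
    have := h _ hx _ hy
    cases b <;> cases c <;> simp_all

theorem isReduced_append_cons_invRev {L : List (α × Bool)} {x : α × Bool} (hL : IsReduced L)
    (hx : NotEndsIn x.1 L) : IsReduced (L ++ x :: invRev L) := by
  have hhead : ∀ y ∈ (invRev L).head?, y.1 ≠ x.1 := by
    simp only [head?_invRev, Option.mem_map]
    rintro _ ⟨y, hy, rfl⟩
    exact hx y hy
  have hcons : IsReduced (x :: invRev L) :=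
    hL.invRev.cons fun y hy h => absurd h.symm (hhead y hy)
  have := (isReduced_invRev_append_iff hL.invRev hcons).2
    fun y hy z hz h => hhead y hy (by simp_all)
  rwa [invRev_invRev] at this

theorem isReduced_append_cons_invRev_append {z a : List (α × Bool)} {x : α × Bool}
    (h : IsReduced (z ++ a)) (hx : NotEndsIn x.1 (z ++ a)) :
    IsReduced (a ++ x :: invRev (z ++ a)) :=
  (isReduced_append_cons_invRev h hx).infix ⟨z, [], by simp⟩

theorem inv_mk_singleton (x : α × Bool) : (mk [x])⁻¹ = mk [(x.1, !x.2)] := by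
  rw [inv_mk]; rfl

theorem mk_append_cons_invRev (z a : List (α × Bool)) (x : α × Bool) :
    mk (a ++ x :: invRev (z ++ a)) = mk a * mk [x] * (mk z * mk a)⁻¹ := by
  rw [mul_mk, mul_mk, inv_mk, mul_mk, append_assoc, singleton_append]

theorem mk_mem_zpowers_of {s : α} {M : List (α × Bool)} (hM : ∀ y ∈ M, y.1 = s) :
    mk M ∈ Subgroup.zpowers (of s) := by
  induction M with
  | nil => exact one_eq_mk (α := α) ▸ Subgroup.one_mem _
  | cons y M ih =>
    obtain ⟨t, b⟩ := y
    obtain rfl : t = s := hM _ mem_cons_self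
    rw [← singleton_append, ← mul_mk]
    refine mul_mem ?_ (ih fun y hy => hM y (mem_cons_of_mem _ hy))
    cases b
    · exact (inv_mk_singleton (t, true)) ▸ inv_mem (Subgroup.mem_zpowers _)
    · exact Subgroup.mem_zpowers _

theorem commute_mk_of_forall_fst_eq {x : α × Bool} {M : List (α × Bool)}
    (hM : ∀ y ∈ M, y.1 = x.1) : Commute (mk M) (mk [x]) := by
  obtain ⟨k, hk⟩ := Subgroup.mem_zpowers_iff.1 (mk_mem_zpowers_of hM)
  obtain ⟨n, hn⟩ := Subgroup.mem_zpowers_iff.1 (mk_mem_zpowers_of (s := x.1) (M := [x]) (by simp))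
  rw [← hk, ← hn]
  exact Commute.zpow_zpow_self _ _ _

variable [DecidableEq α]

theorem IsReduced.toWord_mk {L : List (α × Bool)} (h : IsReduced L) : (mk L).toWord = L := by
  rw [FreeGroup.toWord_mk, h.reduce_eq]

theorem isReduced_iff_norm_mk {L : List (α × Bool)} : IsReduced L ↔ norm (mk L) = L.length := by
  rw [isReduced_iff_reduce_eq, norm, FreeGroup.toWord_mk]
  exact ⟨fun h => by rw [h], (Red.sublist reduce.red).eq_of_length⟩

theorem toWord_mul_of_norm_mul {X Y : FreeGroup α} (h : norm (X * Y) = norm X + norm Y) :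
    (X * Y).toWord = X.toWord ++ Y.toWord := by
  have hXY : X * Y = mk (X.toWord ++ Y.toWord) := by rw [← mul_mk, mk_toWord, mk_toWord]
  rw [hXY] at h ⊢
  exact (isReduced_iff_norm_mk.2 (by rw [h, length_append]; rfl)).toWord_mk

theorem eq_mk_mul_mk_of_toWord {g : FreeGroup α} {L₁ L₂ : List (α × Bool)}
    (h : g.toWord = L₁ ++ L₂) : g = mk L₁ * mk L₂ := by
  rw [mul_mk, ← h, mk_toWord]

theorem norm_mk_of_infix_toWord {g : FreeGroup α} {L : List (α × Bool)} (h : L <:+: g.toWord) :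
    norm (mk L) = L.length := by
  rw [norm, (isReduced_toWord.infix h).toWord_mk]

theorem toWord_conj {g : FreeGroup α} {x : α × Bool} {L M : List (α × Bool)}
    (hg : g.toWord = L ++ M) (hM : ∀ y ∈ M, y.1 = x.1) (hL : NotEndsIn x.1 L) :
    (g * mk [x] * g⁻¹).toWord = L ++ x :: invRev L := by
  have hLred : IsReduced L := isReduced_toWord.infix ⟨[], M, by rw [hg]; rfl⟩
  have hconj : g * mk [x] * g⁻¹ = mk L * mk [x] * (mk L)⁻¹ := by
    rw [← mk_toWord (x := g), hg, ← mul_mk, mul_inv_rev, mul_assoc (mk L),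
      (commute_mk_of_forall_fst_eq hM).eq]
    group
  rw [hconj, inv_mk, mul_mk, mul_mk, append_assoc, singleton_append,
    (isReduced_append_cons_invRev hLred hL).toWord_mk]

theorem norm_conj_le (g : FreeGroup α) (x : α × Bool) :
    norm (g * mk [x] * g⁻¹) ≤ 2 * norm g + 1 := by
  have h₁ := norm_mul_le (g * mk [x]) g⁻¹
  have h₂ := norm_mul_le g (mk [x])
  have h₃ : norm (mk [x]) ≤ 1 := norm_mk_le
  rw [norm_inv_eq] at h₁
  omega

theorem le_norm_conj {g : FreeGroup α} {x : α × Bool} {P Q : List (α × Bool)}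
    (hg : g.toWord = P ++ Q) (hP : NotEndsIn x.1 P) :
    2 * P.length + 1 ≤ norm (g * mk [x] * g⁻¹) := by
  obtain ⟨Q₁, Q₂, rfl, hQ₂, hQ₁⟩ := exists_eq_append_notEndsIn x.1 Q
  rw [norm, toWord_conj (L := P ++ Q₁) (by rw [hg, append_assoc]) hQ₂ (hP.append hQ₁)]
  simp only [length_append, length_cons, invRev_length]
  omega

theorem notEndsIn_of_norm_conj {g : FreeGroup α} {x : α × Bool}
    (h : norm (g * mk [x] * g⁻¹) = 2 * norm g + 1) : NotEndsIn x.1 g.toWord := by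
  obtain ⟨L, M, hg, hM, hL⟩ := exists_eq_append_notEndsIn x.1 g.toWord
  have hlen := congrArg length (toWord_conj hg hM hL)
  rw [← norm, h, norm, hg] at hlen
  simp only [length_append, length_cons, invRev_length] at hlen
  obtain rfl : M = [] := eq_nil_of_length_eq_zero (by omega)
  rwa [hg, append_nil]

variable {C D : FreeGroup α} {x y : α × Bool} {z a b : List (α × Bool)}

theorem norm_conj_conj_lt_of_cancel {b' : List (α × Bool)} (hc : C.toWord = z)
    (hd : D.toWord = z ++ (x.1, !x.2) :: b') :
    norm (C * mk [x] * C⁻¹ * (D * mk [y] * D⁻¹) * (C * mk [x] * C⁻¹)⁻¹) < 2 * norm D + 1 := by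
  have hCz : C = mk z := by rw [← hc, mk_toWord]
  have hDz : D = mk z * (mk [x])⁻¹ * mk b' := by
    rw [inv_mk_singleton, mul_mk, mul_mk, append_assoc, singleton_append, ← hd, mk_toWord]
  have hz : norm (mk z) ≤ z.length := norm_mk_le
  have hb' : norm (mk b') ≤ b'.length := norm_mk_le
  have hnormD : norm D = z.length + b'.length + 1 := by
    rw [norm, hd, length_append, length_cons, add_assoc]
  calc norm (C * mk [x] * C⁻¹ * (D * mk [y] * D⁻¹) * (C * mk [x] * C⁻¹)⁻¹)
      = norm (mk z * mk b' * mk [y] * (mk z * mk b')⁻¹) := by rw [hCz, hDz]; group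
    _ ≤ 2 * norm (mk z * mk b') + 1 := norm_conj_le _ _
    _ < 2 * norm D + 1 := by have := norm_mul_le (mk z) (mk b'); omega

theorem le_norm_conj_conj_of_headsDiffer (hc : C.toWord = z ++ a) (hd : D.toWord = z ++ b)
    (hC : NotEndsIn x.1 C.toWord) (hD : NotEndsIn y.1 D.toWord)
    (h : HeadsDiffer (a ++ [(x.1, !x.2)]) b) :
    2 * norm D + 1 ≤
      norm (C * mk [x] * C⁻¹ * (D * mk [y] * D⁻¹) * (C * mk [x] * C⁻¹)⁻¹) := by
  set p := a ++ (x.1, !x.2) :: invRev (z ++ a)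
  have hp : IsReduced p :=
    isReduced_append_cons_invRev_append (hc ▸ isReduced_toWord) (hc ▸ hC)
  have hb : IsReduced b := (hd ▸ isReduced_toWord : IsReduced (z ++ b)).infix ⟨z, [], by simp⟩
  have hpb : HeadsDiffer p b := fun u hu => h u (by rwa [head?_append_cons] at hu)
  have hg : C * mk [x] * C⁻¹ * D = mk (invRev p ++ b) := by
    rw [← mul_mk, ← inv_mk, mk_append_cons_invRev, ← inv_mk_singleton,
      eq_mk_mul_mk_of_toWord hc, eq_mk_mul_mk_of_toWord hd]
    group
  have hw : (C * mk [x] * C⁻¹ * D).toWord = z ++ a ++ x :: invRev a ++ b := by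
    rw [hg, ((isReduced_invRev_append_iff hp hb).2 hpb).toWord_mk, invRev_append_cons_invRev]
  have hconj : C * mk [x] * C⁻¹ * (D * mk [y] * D⁻¹) * (C * mk [x] * C⁻¹)⁻¹ =
      (C * mk [x] * C⁻¹ * D) * mk [y] * (C * mk [x] * C⁻¹ * D)⁻¹ := by group
  have hnormD : norm D = z.length + b.length := by rw [norm, hd, length_append]
  rw [hconj, hnormD]
  rcases eq_or_ne b [] with rfl | hb0
  · rw [append_nil] at hw
    -- trailing `y.1`-letters stop at `x` if `x.1 ≠ y.1`, and otherwise before `z ++ a = c`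
    by_cases hxy : x.1 = y.1
    · have := le_norm_conj (P := z ++ a) (Q := x :: invRev a) hw (hxy ▸ hc ▸ hC)
      simp only [length_append, length_nil] at this ⊢
      omega
    · have := le_norm_conj (P := z ++ a ++ [x]) (Q := invRev a) (by rw [hw]; simp)
        (by simpa [NotEndsIn] using hxy)
      simp only [length_append, length_singleton, length_nil] at this ⊢
      omega
  · have hyw : NotEndsIn y.1 (z ++ a ++ x :: invRev a ++ b) :=
      (notEndsIn_append_iff _ hb0).2 ((notEndsIn_append_iff z hb0).1 (hd ▸ hD))
    have := le_norm_conj (Q := []) (by rw [hw, append_nil]) hyw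
    simp only [length_append, length_cons] at this
    omega

theorem le_norm_conj_conj_iff (hc : C.toWord = z ++ a) (hd : D.toWord = z ++ b)
    (hab : HeadsDiffer a b) (hC : NotEndsIn x.1 C.toWord) (hD : NotEndsIn y.1 D.toWord) :
    2 * norm D + 1 ≤
        norm (C * mk [x] * C⁻¹ * (D * mk [y] * D⁻¹) * (C * mk [x] * C⁻¹)⁻¹) ↔
      HeadsDiffer (a ++ [(x.1, !x.2)]) b := by
  refine ⟨fun hle => ?_, le_norm_conj_conj_of_headsDiffer hc hd hC hD⟩
  rintro q hq q' hq' rfl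
  cases a with
  | cons a₀ a' => exact hab a₀ rfl q hq' (by simpa using hq)
  | nil =>
    obtain rfl : (x.1, !x.2) = q := by simpa using hq
    obtain ⟨b', rfl⟩ : ∃ b', b = (x.1, !x.2) :: b' := by
      cases b with
      | nil => simp at hq'
      | cons b₀ b' => exact ⟨b', by simpa using hq'⟩
    exact absurd hle (not_le.2 (norm_conj_conj_lt_of_cancel (by rwa [append_nil] at hc) hd))

theorem norm_conj_mul_conj_eq_iff (hc : C.toWord = z ++ a) (hd : D.toWord = z ++ b)
    (hC : NotEndsIn x.1 C.toWord) (hD : NotEndsIn y.1 D.toWord) :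
    norm (C * mk [x] * C⁻¹ * (D * mk [y] * D⁻¹)) =
        2 * z.length + 2 * a.length + 2 * b.length + 2 ↔
      HeadsDiffer (a ++ [(x.1, !x.2)]) (b ++ [y]) := by
  set p := a ++ (x.1, !x.2) :: invRev (z ++ a)
  set q := b ++ y :: invRev (z ++ b)
  have hp : IsReduced p :=
    isReduced_append_cons_invRev_append (hc ▸ isReduced_toWord) (hc ▸ hC)
  have hq : IsReduced q :=
    isReduced_append_cons_invRev_append (hd ▸ isReduced_toWord) (hd ▸ hD)
  have hprod : C * mk [x] * C⁻¹ * (D * mk [y] * D⁻¹) = mk (invRev p ++ q) := by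
    rw [← mul_mk, ← inv_mk, mk_append_cons_invRev, mk_append_cons_invRev, ← inv_mk_singleton,
      eq_mk_mul_mk_of_toWord hc, eq_mk_mul_mk_of_toWord hd]
    group
  have hlen : (invRev p ++ q).length = 2 * z.length + 2 * a.length + 2 * b.length + 2 := by
    simp only [p, q, length_append, length_cons, invRev_length]
    omega
  rw [hprod, ← hlen, ← isReduced_iff_norm_mk, isReduced_invRev_append_iff hp hq]
  simp only [HeadsDiffer, p, q, head?_append_cons]

theorem hurwitz_ge_iff_headsDiffer (hxy : (x.1, !x.2) ≠ y) (hc : C.toWord = z ++ a)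
    (hd : D.toWord = z ++ b) (hab : HeadsDiffer a b)
    (hC : norm (C * mk [x] * C⁻¹) = 2 * norm C + 1)
    (hD : norm (D * mk [y] * D⁻¹) = 2 * norm D + 1) :
    (norm (C * mk [x] * C⁻¹ * (D * mk [y] * D⁻¹) * (C * mk [x] * C⁻¹)⁻¹) +
          norm (C * mk [x] * C⁻¹) ≥ norm (C * mk [x] * C⁻¹) + norm (D * mk [y] * D⁻¹) ∧
        norm (D * mk [y] * D⁻¹) +
            norm ((D * mk [y] * D⁻¹)⁻¹ * (C * mk [x] * C⁻¹) * (D * mk [y] * D⁻¹)) ≥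
          norm (C * mk [x] * C⁻¹) + norm (D * mk [y] * D⁻¹)) ↔
      HeadsDiffer (a ++ [(x.1, !x.2)]) (b ++ [y]) := by
  have hCx := notEndsIn_of_norm_conj hC
  have hDy := notEndsIn_of_norm_conj hD
  have h₁ := le_norm_conj_conj_iff hc hd hab hCx hDy
  -- `σ f` is the `σ⁻¹` case for `(f₂⁻¹, f₁⁻¹)`: `f₂⁻¹ f₁⁻¹ f₂ = (f₂⁻¹ f₁ f₂)⁻¹`
  have h₂ := le_norm_conj_conj_iff (x := (y.1, !y.2)) (y := (x.1, !x.2)) hd hc hab.symm hDy hCx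
  have hinv : D * mk [(y.1, !y.2)] * D⁻¹ * (C * mk [(x.1, !x.2)] * C⁻¹) *
        (D * mk [(y.1, !y.2)] * D⁻¹)⁻¹ =
      ((D * mk [y] * D⁻¹)⁻¹ * (C * mk [x] * C⁻¹) * (D * mk [y] * D⁻¹))⁻¹ := by
    rw [← inv_mk_singleton, ← inv_mk_singleton]
    group
  rw [hinv, norm_inv_eq] at h₂
  simp only [Bool.not_not, Prod.mk.eta] at h₂
  rw [hC, hD, headsDiffer_append_singleton_iff hxy, ← h₁, ← h₂]
  simp only [hab, true_and]
  omega

theorem hurwitz_reduction (hxy : (x.1, !x.2) ≠ y)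
    (hC : norm (C * mk [x] * C⁻¹) = 2 * norm C + 1)
    (hD : norm (D * mk [y] * D⁻¹) = 2 * norm D + 1) :
    (norm (C * mk [x] * C⁻¹ * (D * mk [y] * D⁻¹) * (C * mk [x] * C⁻¹)⁻¹) +
          norm (C * mk [x] * C⁻¹) ≥ norm (C * mk [x] * C⁻¹) + norm (D * mk [y] * D⁻¹) ∧
        norm (D * mk [y] * D⁻¹) +
            norm ((D * mk [y] * D⁻¹)⁻¹ * (C * mk [x] * C⁻¹) * (D * mk [y] * D⁻¹)) ≥
          norm (C * mk [x] * C⁻¹) + norm (D * mk [y] * D⁻¹)) ↔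
      ∃ Z A B : FreeGroup α,
        C = Z * A ∧ norm C = norm Z + norm A ∧ D = Z * B ∧ norm D = norm Z + norm B ∧
          norm (C * mk [x] * C⁻¹ * (D * mk [y] * D⁻¹)) =
            2 * norm Z + 2 * norm A + 2 * norm B + 2 := by
  constructor
  · intro h
    obtain ⟨z, a, b, hc, hd, hab⟩ := exists_eq_append_headsDiffer C.toWord D.toWord
    have hW := (hurwitz_ge_iff_headsDiffer hxy hc hd hab hC hD).1 h
    have hz := norm_mk_of_infix_toWord (g := C) ⟨[], a, by rw [hc, nil_append]⟩
    have ha := norm_mk_of_infix_toWord (g := C) ⟨z, [], by rw [hc, append_nil]⟩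
    have hb := norm_mk_of_infix_toWord (g := D) ⟨z, [], by rw [hd, append_nil]⟩
    refine ⟨mk z, mk a, mk b, eq_mk_mul_mk_of_toWord hc, ?_, eq_mk_mul_mk_of_toWord hd, ?_, ?_⟩
    · rw [norm, hc, length_append, hz, ha]
    · rw [norm, hd, length_append, hz, hb]
    · rw [hz, ha, hb]
      exact (norm_conj_mul_conj_eq_iff hc hd (notEndsIn_of_norm_conj hC)
        (notEndsIn_of_norm_conj hD)).2 hW
  · rintro ⟨Z, A, B, rfl, hCA, rfl, hDB, hW⟩
    have hc := toWord_mul_of_norm_mul hCA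
    have hd := toWord_mul_of_norm_mul hDB
    have hW' := (norm_conj_mul_conj_eq_iff hc hd (notEndsIn_of_norm_conj hC)
      (notEndsIn_of_norm_conj hD)).1 hW
    exact (hurwitz_ge_iff_headsDiffer hxy hc hd
      ((headsDiffer_append_singleton_iff hxy).1 hW').1 hC hD).2 hW'

end FreeGroup

/-- **Lemma (reduction lemma).** Let `u, v` be generators of the free group `F_m` and
`C, D ∈ F_m` with `l(C u C⁻¹) = 2 l(C) + 1` and `l(D v D⁻¹) = 2 l(D) + 1`; set
`f = (f₁, f₂) = (C u C⁻¹, D v D⁻¹)`.  For the Hurwitz action of `σ = σ_1 ∈ B_2`,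
`σ f = (f₂, f₂⁻¹ f₁ f₂)` and `σ⁻¹ f = (f₁ f₂ f₁⁻¹, f₁)`, one has
`l(σ⁻¹ f) ≥ l(f)` and `l(σ f) ≥ l(f)` if and only if there are `Z, A, B ∈ F_m` with
`C = Z A`, `l(C) = l(Z) + l(A)`, `D = Z B`, `l(D) = l(Z) + l(B)` and
`l(C u C⁻¹ D v D⁻¹) = 2 l(Z) + 2 l(A) + 2 l(B) + 2`. -/
theorem reduction_lemma {m : ℕ} (u v C D : FreeGroup (Fin m))
    (hu : ∃ s, u = FreeGroup.of s) (hv : ∃ s, v = FreeGroup.of s)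
    (hC : redLen (C * u * C⁻¹) = 2 * redLen C + 1)
    (hD : redLen (D * v * D⁻¹) = 2 * redLen D + 1) :
    (redLen ((C * u * C⁻¹) * (D * v * D⁻¹) * (C * u * C⁻¹)⁻¹) + redLen (C * u * C⁻¹) ≥
        redLen (C * u * C⁻¹) + redLen (D * v * D⁻¹) ∧
      redLen (D * v * D⁻¹) + redLen ((D * v * D⁻¹)⁻¹ * (C * u * C⁻¹) * (D * v * D⁻¹)) ≥
        redLen (C * u * C⁻¹) + redLen (D * v * D⁻¹)) ↔
    ∃ Z A B : FreeGroup (Fin m),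
      C = Z * A ∧ redLen C = redLen Z + redLen A ∧
      D = Z * B ∧ redLen D = redLen Z + redLen B ∧
      redLen ((C * u * C⁻¹) * (D * v * D⁻¹)) =
        2 * redLen Z + 2 * redLen A + 2 * redLen B + 2 := by
  obtain ⟨s, rfl⟩ := hu
  obtain ⟨t, rfl⟩ := hv
  exact FreeGroup.hurwitz_reduction (x := (s, true)) (y := (t, true)) (by simp) hC hD
end
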